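/- If e is a pendant edge of a graph G (one endpoint of e has degree 1), then H^i(G) ≅ H^i(G/e){1} for all i, where {1} denotes shifting all degrees up by 1. -/

import Mathlib

/-- A finite multigraph (possibly with loops and multiple edges), with
vertex type `V` and edges indexed by `Fin n`, edge `e` having endpoints `ends e`. -/
structure OGraph where
  V : Type
  [finV : Fintype V]
  n : ℕ
  ends : Fin n → Sym2 V

attribute [instance] OGraph.finV

namespace OGraph

variable (G : OGraph)

/-- Two vertices are related if some edge in `s` joins them. -/
def rel (s : Finset (Fin G.n)) (u v : G.V) : Prop := ∃ e ∈ s, G.ends e = s(u, v)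

/-- The set of connected components of the spanning subgraph `[G:s]`. -/
def Comp (s : Finset (Fin G.n)) : Type := Quot (G.rel s)

/-- `k(s)`: the number of connected components of the spanning subgraph `[G:s]`. -/
noncomputable def ncomp (s : Finset (Fin G.n)) : ℕ := Nat.card (G.Comp s)

/-- The number of proper colorings of `G` with `m` colors: the value `P_G(m)` of
the chromatic polynomial at the natural number `m`. -/
noncomputable def chromatic (m : ℕ) : ℕ :=
  Nat.card {c : G.V → Fin m // ∀ e u v, G.ends e = s(u, v) → c u ≠ c v}

end OGraph

namespace OGraph

noncomputable instance finiteQuot {V : Type} [Finite V] (r : V → V → Prop) :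
    Fintype (Quot r) :=
  letI : Finite (Quot r) :=
    Finite.of_surjective (Quot.mk r) fun q => Quot.inductionOn q fun v => ⟨v, rfl⟩
  Fintype.ofFinite _

/-- The graph `G − e` obtained from `G` by deleting the edge `e`; the ordering of
the remaining edges is inherited from `G`. -/
def delG (V : Type) [Fintype V] {n : ℕ} (ends : Fin (n + 1) → Sym2 V)
    (e : Fin (n + 1)) : OGraph :=
  ⟨V, n, fun k => ends (e.succAbove k)⟩

/-- The graph `G / e` obtained from `G` by contracting the edge `e` (identifying its
two endpoints and removing `e`); the ordering of the remaining edges is inherited. -/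
noncomputable def ctrG (V : Type) [Fintype V] {n : ℕ} (ends : Fin (n + 1) → Sym2 V)
    (e : Fin (n + 1)) : OGraph :=
  ⟨Quot (fun u v : V => ends e = s(u, v)), n,
    fun k => (ends (e.succAbove k)).map (Quot.mk _)⟩

end OGraph

namespace OGraph

/-- The map on quotients induced by an implication of relations. -/
def qmap {V : Type} {r r' : V → V → Prop} (h : ∀ u v, r u v → r' u v) :
    Quot r → Quot r' :=
  Quot.lift (Quot.mk r') fun u v huv => Quot.sound (h u v huv)

variable (G : OGraph)

/-- An enhanced state: a subset `s` of the edges together with an assignment of a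
color (`1` or `x`; a component is "colored `x`" when the predicate holds) to each
connected component of the spanning subgraph `[G:s]`. -/
abbrev EState := Σ s : Finset (Fin G.n), (G.Comp s → Prop)

/-- `j(S)`: the number of components colored `x` in the enhanced state `S`. -/
noncomputable def jdeg (S : G.EState) : ℕ := Nat.card {k : G.Comp S.1 // S.2 k}

open Classical in
/-- The enhanced state(s) obtained from `S` by adding the edge `e`: zero if `e`
already belongs to `S` or if the added edge merges two components both colored `x`
(the product `x∗x = 0`); otherwise the enhanced state on `insert e s` whose
coloring is obtained from that of `S` using the product
`1∗1 = 1`, `1∗x = x∗1 = x`. -/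
noncomputable def addEdge (S : G.EState) (e : Fin G.n) : G.EState →₀ ℤ :=
  if e ∈ S.1 then 0
  else
    let p : G.Comp S.1 → G.Comp (insert e S.1) :=
      qmap fun _ _ huv => huv.elim fun f hf => ⟨f, Finset.mem_insert_of_mem hf.1, hf.2⟩
    if ∃ k1 k2 : G.Comp S.1, k1 ≠ k2 ∧ p k1 = p k2 ∧ S.2 k1 ∧ S.2 k2 then 0
    else Finsupp.single ⟨insert e S.1, fun K => ∃ k, p k = K ∧ S.2 k⟩ 1

/-- The differential applied to a single enhanced state: the signed sum, over all
edges `e` not in `S`, of the states obtained by adding `e`; the sign is `(-1)^{n(e)}`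
where `n(e)` is the number of edges of `S` ordered before `e`. -/
noncomputable def dState (S : G.EState) : G.EState →₀ ℤ :=
  ∑ e : Fin G.n, ((-1 : ℤ) ^ (S.1.filter fun f => f < e).card) • G.addEdge S e

/-- The differential of the graph cohomology complex, as a linear endomorphism of
the free `ℤ`-module generated by all enhanced states. -/
noncomputable def diff : (G.EState →₀ ℤ) →ₗ[ℤ] (G.EState →₀ ℤ) :=
  Finsupp.lsum ℤ fun S => LinearMap.toSpanSingleton ℤ _ (G.dState S)

/-- The chain group `C^{i,j}(G)`: the free `ℤ`-module spanned by the enhanced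
states with `i` edges and `j` components colored `x`, as a submodule of the free
module on all enhanced states. -/
noncomputable def Cmod (i j : ℕ) : Submodule ℤ (G.EState →₀ ℤ) :=
  Finsupp.supported ℤ ℤ {S : G.EState | S.1.card = i ∧ G.jdeg S = j}

/-- The cocycles of bidegree `(i,j)`. -/
noncomputable def Zmod (i j : ℕ) : Submodule ℤ (G.EState →₀ ℤ) :=
  LinearMap.ker G.diff ⊓ G.Cmod i j

/-- The coboundaries: `0` for `i = 0`, the image of `C^{i,j}` for `i + 1`. -/
noncomputable def Bmod : ℕ → ℕ → Submodule ℤ (G.EState →₀ ℤ)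
  | 0, _ => ⊥
  | i + 1, j => Submodule.map G.diff (G.Cmod i j)

/-- The graph cohomology group `H^{i,j}(G)` (cocycles modulo coboundaries in
bidegree `(i,j)`). -/
noncomputable def Hmod (i j : ℕ) : Type :=
  (G.Zmod i j).toAddSubgroup ⧸
    (AddSubgroup.comap (G.Zmod i j).toAddSubgroup.subtype (G.Bmod i j).toAddSubgroup)

noncomputable instance (i j : ℕ) : AddCommGroup (G.Hmod i j) := by
  delta Hmod; infer_instance

end OGraph


-- ====== generic helpers ======
namespace OGraph

variable {X : OGraph}

lemma estate_ext {s : Finset (Fin X.n)} {c c' : X.Comp s → Prop}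
    (h : ∀ u, c (Quot.mk _ u) ↔ c' (Quot.mk _ u)) :
    (⟨s, c⟩ : X.EState) = ⟨s, c'⟩ := by
  refine congrArg (Sigma.mk s) (funext fun K => ?_)
  induction K using Quot.ind with
  | _ u => exact propext (h u)

lemma estate_eq {s s' : Finset (Fin X.n)} (hs : s = s') {c : X.Comp s → Prop}
    {c' : X.Comp s' → Prop}
    (h : ∀ u, c (Quot.mk (X.rel s) u) ↔ c' (Quot.mk (X.rel s') u)) :
    (⟨s, c⟩ : X.EState) = ⟨s', c'⟩ := by
  subst hs; exact estate_ext h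

lemma mk_mono {s s' : Finset (Fin X.n)} (hss : s ⊆ s') {u u' : X.V}
    (h : Quot.mk (X.rel s) u = Quot.mk (X.rel s) u') :
    Quot.mk (X.rel s') u = Quot.mk (X.rel s') u' :=
  congrArg (qmap fun _ _ hab => hab.elim fun f hf => ⟨f, hss hf.1, hf.2⟩) h

lemma mk_eq_congr {s s' : Finset (Fin X.n)} (hs : s = s') {u u' : X.V} :
    (Quot.mk (X.rel s) u = Quot.mk (X.rel s) u') ↔
      (Quot.mk (X.rel s') u = Quot.mk (X.rel s') u') := by
  subst hs; rfl

lemma rel_symm {s : Finset (Fin X.n)} {u u' : X.V} (h : X.rel s u u') : X.rel s u' u := by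
  obtain ⟨f, hf, hfe⟩ := h
  exact ⟨f, hf, by rwa [Sym2.eq_swap] at hfe⟩

lemma rel_cases {s : Finset (Fin X.n)} {f : Fin X.n} {a b x y : X.V}
    (hf : X.ends f = s(a, b)) (h : X.rel (insert f s) x y) :
    X.rel s x y ∨ (x = a ∧ y = b) ∨ (x = b ∧ y = a) := by
  obtain ⟨g, hg, hge⟩ := h
  rcases Finset.mem_insert.1 hg with rfl | hgs
  · rw [hf] at hge
    rcases Sym2.eq_iff.1 hge with ⟨rfl, rfl⟩ | ⟨rfl, rfl⟩
    · exact Or.inr (Or.inl ⟨rfl, rfl⟩)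
    · exact Or.inr (Or.inr ⟨rfl, rfl⟩)
  · exact Or.inl ⟨g, hgs, hge⟩

lemma mk_insert_iff {s : Finset (Fin X.n)} {f : Fin X.n} {a b : X.V}
    (hf : X.ends f = s(a, b)) {u u' : X.V} :
    Quot.mk (X.rel (insert f s)) u = Quot.mk (X.rel (insert f s)) u' ↔
      (Quot.mk (X.rel s) u = Quot.mk (X.rel s) u' ∨
        ((Quot.mk (X.rel s) u = Quot.mk (X.rel s) a ∨
            Quot.mk (X.rel s) u = Quot.mk (X.rel s) b) ∧
         (Quot.mk (X.rel s) u' = Quot.mk (X.rel s) a ∨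
            Quot.mk (X.rel s) u' = Quot.mk (X.rel s) b))) := by
  constructor
  · intro h
    rw [Quot.eq] at h
    induction h with
    | rel x y hxy =>
      rcases rel_cases hf hxy with hr | ⟨rfl, rfl⟩ | ⟨rfl, rfl⟩
      · exact Or.inl (Quot.sound hr)
      · exact Or.inr ⟨Or.inl rfl, Or.inr rfl⟩
      · exact Or.inr ⟨Or.inr rfl, Or.inl rfl⟩
    | refl x => exact Or.inl rfl
    | symm x y _ ih =>
      rcases ih with h | ⟨h1, h2⟩
      · exact Or.inl h.symm
      · exact Or.inr ⟨h2, h1⟩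
    | trans x y z _ _ ih1 ih2 =>
      rcases ih1 with h1 | ⟨h1, h2⟩ <;> rcases ih2 with h3 | ⟨h3, h4⟩
      · exact Or.inl (h1.trans h3)
      · exact Or.inr ⟨h1 ▸ h3, h4⟩
      · exact Or.inr ⟨h1, h3 ▸ h2⟩
      · exact Or.inr ⟨h1, h4⟩
  · intro h
    have hins : ∀ p q : X.V, Quot.mk (X.rel s) p = Quot.mk (X.rel s) q →
        Quot.mk (X.rel (insert f s)) p = Quot.mk (X.rel (insert f s)) q :=
      fun p q => mk_mono (Finset.subset_insert f s)
    have hab : Quot.mk (X.rel (insert f s)) a = Quot.mk (X.rel (insert f s)) b :=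
      Quot.sound ⟨f, Finset.mem_insert_self f s, hf⟩
    rcases h with h | ⟨h1 | h1, h2 | h2⟩
    · exact hins _ _ h
    · exact (hins _ _ h1).trans (hins _ _ h2).symm
    · exact ((hins _ _ h1).trans hab).trans (hins _ _ h2).symm
    · exact ((hins _ _ h1).trans hab.symm).trans (hins _ _ h2).symm
    · exact (hins _ _ h1).trans (hins _ _ h2).symm

def pmap (s : Finset (Fin X.n)) (f : Fin X.n) : X.Comp s → X.Comp (insert f s) :=
  qmap fun _ _ huv => huv.elim fun g hg => ⟨g, Finset.mem_insert_of_mem hg.1, hg.2⟩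

def pushc (S : X.EState) (f : Fin X.n) : X.Comp (insert f S.1) → Prop :=
  fun K => ∃ k, pmap S.1 f k = K ∧ S.2 k

open Classical in
lemma addEdge_of_not_mem (S : X.EState) {f : Fin X.n} (hfs : f ∉ S.1) :
    X.addEdge S f =
      if ∃ k1 k2 : X.Comp S.1, k1 ≠ k2 ∧ pmap S.1 f k1 = pmap S.1 f k2 ∧ S.2 k1 ∧ S.2 k2
      then 0
      else Finsupp.single ⟨insert f S.1, X.pushc S f⟩ 1 := by
  rw [addEdge, if_neg hfs]; rfl

lemma addEdge_of_mem (S : X.EState) {f : Fin X.n} (hfs : f ∈ S.1) :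
    X.addEdge S f = 0 := by
  rw [addEdge, if_pos hfs]

open Classical in
lemma addEdge_eq {s : Finset (Fin X.n)} {c : X.Comp s → Prop} {f : Fin X.n} {a b : X.V}
    (hf : X.ends f = s(a, b)) (hfs : f ∉ s) :
    X.addEdge ⟨s, c⟩ f =
      if Quot.mk (X.rel s) a ≠ Quot.mk (X.rel s) b ∧
          c (Quot.mk (X.rel s) a) ∧ c (Quot.mk (X.rel s) b) then 0
      else Finsupp.single ⟨insert f s, X.pushc ⟨s, c⟩ f⟩ 1 := by
  rw [addEdge_of_not_mem _ hfs]
  have hcond : (∃ k1 k2 : X.Comp s, k1 ≠ k2 ∧ pmap s f k1 = pmap s f k2 ∧ c k1 ∧ c k2) ↔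
      (Quot.mk (X.rel s) a ≠ Quot.mk (X.rel s) b ∧
        c (Quot.mk (X.rel s) a) ∧ c (Quot.mk (X.rel s) b)) := by
    constructor
    · rintro ⟨k1, k2, hne, hpe, hc1, hc2⟩
      obtain ⟨x, rfl⟩ := Quot.exists_rep k1
      obtain ⟨y, rfl⟩ := Quot.exists_rep k2
      have hpe' : Quot.mk (X.rel (insert f s)) x = Quot.mk (X.rel (insert f s)) y := hpe
      rcases (mk_insert_iff hf).1 hpe' with h | ⟨hx | hx, hy | hy⟩
      · exact absurd h hne
      · exact absurd (hx.trans hy.symm) hne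
      · exact ⟨fun hh => hne (hx.trans (hh.trans hy.symm)), hx ▸ hc1, hy ▸ hc2⟩
      · exact ⟨fun hh => hne (hx.trans (hh.symm.trans hy.symm)), hy ▸ hc2, hx ▸ hc1⟩
      · exact absurd (hx.trans hy.symm) hne
    · rintro ⟨hab, ha, hb⟩
      refine ⟨Quot.mk _ a, Quot.mk _ b, hab, ?_, ha, hb⟩
      exact Quot.sound ⟨f, Finset.mem_insert_self f s, hf⟩
  simp only [hcond]

lemma pushc_eval {s : Finset (Fin X.n)} {c : X.Comp s → Prop} {f : Fin X.n} {a b : X.V}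
    (hf : X.ends f = s(a, b)) (u : X.V) :
    X.pushc ⟨s, c⟩ f (Quot.mk (X.rel (insert f s)) u) ↔
      (c (Quot.mk (X.rel s) u) ∨
        ((Quot.mk (X.rel s) u = Quot.mk (X.rel s) a ∨
            Quot.mk (X.rel s) u = Quot.mk (X.rel s) b) ∧
          (c (Quot.mk (X.rel s) a) ∨ c (Quot.mk (X.rel s) b)))) := by
  constructor
  · rintro ⟨k, hk, hck⟩
    obtain ⟨z, rfl⟩ := Quot.exists_rep k
    have hk' : Quot.mk (X.rel (insert f s)) z = Quot.mk (X.rel (insert f s)) u := hk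
    rcases (mk_insert_iff hf).1 hk' with h | ⟨hz, hu⟩
    · exact Or.inl (h ▸ hck)
    · refine Or.inr ⟨hu, ?_⟩
      rcases hz with hz | hz
      · exact Or.inl (hz ▸ hck)
      · exact Or.inr (hz ▸ hck)
  · rintro (hc | ⟨hu | hu, hc | hc⟩)
    · exact ⟨Quot.mk _ u, rfl, hc⟩
    · exact ⟨Quot.mk _ a, (mk_insert_iff hf).2 (Or.inr ⟨Or.inl rfl, Or.inl hu⟩), hc⟩
    · exact ⟨Quot.mk _ b, (mk_insert_iff hf).2 (Or.inr ⟨Or.inr rfl, Or.inl hu⟩), hc⟩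
    · exact ⟨Quot.mk _ a, (mk_insert_iff hf).2 (Or.inr ⟨Or.inl rfl, Or.inr hu⟩), hc⟩
    · exact ⟨Quot.mk _ b, (mk_insert_iff hf).2 (Or.inr ⟨Or.inr rfl, Or.inr hu⟩), hc⟩

noncomputable def stm {α β : Type} (g : α → (β →₀ ℤ)) : (α →₀ ℤ) →ₗ[ℤ] (β →₀ ℤ) :=
  Finsupp.lsum ℤ fun S => LinearMap.toSpanSingleton ℤ _ (g S)

lemma stm_single {α β : Type} (g : α → (β →₀ ℤ)) (a : α) :
    stm g (Finsupp.single a 1) = g a := by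
  simp [stm, Finsupp.lsum_single, LinearMap.toSpanSingleton_apply]

lemma diff_eq_stm : X.diff = stm X.dState := rfl

lemma diff_single (S : X.EState) : X.diff (Finsupp.single S 1) = X.dState S := by
  rw [diff_eq_stm, stm_single]

lemma stm_supported {α β : Type} (g : α → (β →₀ ℤ)) {A : Set α} {B : Set β}
    (h : ∀ a ∈ A, g a ∈ Finsupp.supported ℤ ℤ B) {x : α →₀ ℤ}
    (hx : x ∈ Finsupp.supported ℤ ℤ A) :
    stm g x ∈ Finsupp.supported ℤ ℤ B := by
  rw [Finsupp.mem_supported] at hx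
  rw [stm, Finsupp.lsum_apply]
  unfold Finsupp.sum
  refine Submodule.sum_mem _ fun a ha => ?_
  exact Submodule.smul_mem _ (x a) (h a (hx ha))

end OGraph

-- setup structure for a pendant edge
structure PSetup where
  V : Type
  [finV : Fintype V]
  n : ℕ
  ends : Fin (n + 1) → Sym2 V
  e : Fin (n + 1)
  v : V
  w : V
  hvw : ends e = s(v, w)
  hne : v ≠ w
  hdeg : ∀ f : Fin (n + 1), v ∈ ends f → f = e

attribute [instance] PSetup.finV

namespace PSetup

open OGraph

variable (P : PSetup)

abbrev G : OGraph := OGraph.mk P.V (P.n + 1) P.ends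

noncomputable abbrev G' : OGraph := OGraph.ctrG P.V P.ends P.e

def φ : P.V → (P.G').V := Quot.mk fun u u' => P.ends P.e = s(u, u')

lemma phi_vw : P.φ P.v = P.φ P.w := Quot.sound P.hvw

lemma phi_eq_iff {u u' : P.V} :
    P.φ u = P.φ u' ↔ u = u' ∨ ((u = P.v ∨ u = P.w) ∧ (u' = P.v ∨ u' = P.w)) := by
  constructor
  · intro h
    erw [φ, Quot.eq] at h
    induction h with
    | rel x y hxy =>
      rw [P.hvw] at hxy
      rcases Sym2.eq_iff.1 hxy with ⟨h1, h2⟩ | ⟨h1, h2⟩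
      · exact Or.inr ⟨Or.inl h1.symm, Or.inr h2.symm⟩
      · exact Or.inr ⟨Or.inr h2.symm, Or.inl h1.symm⟩
    | refl x => exact Or.inl rfl
    | symm x y _ ih =>
      rcases ih with h | ⟨h1, h2⟩
      · exact Or.inl h.symm
      · exact Or.inr ⟨h2, h1⟩
    | trans x y z _ _ ih1 ih2 =>
      rcases ih1 with h1 | ⟨h1, h2⟩ <;> rcases ih2 with h3 | ⟨h3, h4⟩
      · exact Or.inl (h1.trans h3)
      · exact Or.inr ⟨h1 ▸ h3, h4⟩
      · exact Or.inr ⟨h1, h3 ▸ h2⟩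
      · exact Or.inr ⟨h1, h4⟩
  · rintro (rfl | ⟨h1 | h1, h2 | h2⟩)
    · rfl
    · subst h1; subst h2; rfl
    · subst h1; subst h2; exact P.phi_vw
    · subst h1; subst h2; exact P.phi_vw.symm
    · subst h1; subst h2; rfl

lemma phi_inj {u u' : P.V} (hu : u ≠ P.v) (hu' : u' ≠ P.v) (h : P.φ u = P.φ u') :
    u = u' := by
  rcases P.phi_eq_iff.1 h with h | ⟨h1 | h1, h2 | h2⟩
  · exact h
  · exact absurd h1 hu
  · exact absurd h1 hu
  · exact absurd h2 hu'
  · exact h1.trans h2.symm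

lemma exists_phi_rep (q : (P.G').V) : ∃ u, u ≠ P.v ∧ P.φ u = q := by
  induction q using Quot.ind with
  | _ u =>
    by_cases h : u = P.v
    · exact ⟨P.w, Ne.symm P.hne, h ▸ P.phi_vw.symm⟩
    · exact ⟨u, h, rfl⟩

noncomputable def ψ (q : (P.G').V) : P.V := (P.exists_phi_rep q).choose

lemma psi_ne (q : (P.G').V) : P.ψ q ≠ P.v := (P.exists_phi_rep q).choose_spec.1

lemma phi_psi (q : (P.G').V) : P.φ (P.ψ q) = q := (P.exists_phi_rep q).choose_spec.2

lemma psi_phi {u : P.V} (hu : u ≠ P.v) : P.ψ (P.φ u) = u :=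
  P.phi_inj (P.psi_ne _) hu (P.phi_psi (P.φ u))

-- edges
lemma v_not_mem_ends {f : Fin (P.n + 1)} (hf : f ≠ P.e) : P.v ∉ P.ends f :=
  fun h => hf (P.hdeg f h)

abbrev sA : Fin P.n → Fin (P.n + 1) := P.e.succAbove

lemma sA_ne (k : Fin P.n) : P.sA k ≠ P.e := Fin.succAbove_ne P.e k

def sAe : Fin P.n ↪ Fin (P.n + 1) := ⟨P.e.succAbove, Fin.succAbove_right_injective⟩

def lift (t : Finset (Fin P.n)) : Finset (Fin (P.n + 1)) := t.map P.sAe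

def tOf (s : Finset (Fin (P.n + 1))) : Finset (Fin P.n) :=
  Finset.univ.filter fun k => P.sA k ∈ s

lemma mem_lift {t : Finset (Fin P.n)} {f : Fin (P.n + 1)} :
    f ∈ P.lift t ↔ ∃ k ∈ t, P.sA k = f := by
  simp [lift, sAe, sA, Finset.mem_map]

lemma sA_mem_lift {t : Finset (Fin P.n)} {k : Fin P.n} : P.sA k ∈ P.lift t ↔ k ∈ t := by
  rw [mem_lift]
  constructor
  · rintro ⟨k', hk', he⟩
    rwa [show k' = k from Fin.succAbove_right_injective he] at hk'
  · exact fun h => ⟨k, h, rfl⟩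

lemma e_not_mem_lift (t : Finset (Fin P.n)) : P.e ∉ P.lift t := by
  rw [mem_lift]
  rintro ⟨k, _, hk⟩
  exact P.sA_ne k hk

lemma mem_tOf {s : Finset (Fin (P.n + 1))} {k : Fin P.n} : k ∈ P.tOf s ↔ P.sA k ∈ s := by
  simp [tOf]

lemma lift_tOf {s : Finset (Fin (P.n + 1))} (hs : P.e ∉ s) : P.lift (P.tOf s) = s := by
  ext f
  rw [mem_lift]
  constructor
  · rintro ⟨k, hk, rfl⟩
    exact P.mem_tOf.1 hk
  · intro hf
    have hfe : f ≠ P.e := fun h => hs (h ▸ hf)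
    obtain ⟨k, hk⟩ := Fin.exists_succAbove_eq hfe
    exact ⟨k, P.mem_tOf.2 (by rwa [show P.sA k = f from hk]), hk⟩

lemma tOf_lift (t : Finset (Fin P.n)) : P.tOf (P.lift t) = t := by
  ext k; rw [mem_tOf, sA_mem_lift]

lemma tOf_insert_sA {s : Finset (Fin (P.n + 1))} {k : Fin P.n} :
    P.tOf (insert (P.sA k) s) = insert k (P.tOf s) := by
  ext k'
  rw [mem_tOf, Finset.mem_insert, Finset.mem_insert, mem_tOf]
  constructor
  · rintro (h | h)
    · exact Or.inl (Fin.succAbove_right_injective h)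
    · exact Or.inr h
  · rintro (rfl | h)
    · exact Or.inl rfl
    · exact Or.inr h

lemma tOf_insert_e {s : Finset (Fin (P.n + 1))} : P.tOf (insert P.e s) = P.tOf s := by
  ext k
  rw [mem_tOf, Finset.mem_insert, mem_tOf]
  exact ⟨fun h => h.resolve_left (P.sA_ne k), Or.inr⟩

lemma lift_insert (t : Finset (Fin P.n)) (k : Fin P.n) :
    P.lift (insert k t) = insert (P.sA k) (P.lift t) := Finset.map_insert _ _ _

lemma card_lift (t : Finset (Fin P.n)) : (P.lift t).card = t.card := Finset.card_map _

lemma card_tOf {s : Finset (Fin (P.n + 1))} (hs : P.e ∉ s) : (P.tOf s).card = s.card := by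
  conv_rhs => rw [← P.lift_tOf hs]
  rw [card_lift]

lemma insert_e_lift_tOf {s : Finset (Fin (P.n + 1))} (he : P.e ∈ s) :
    insert P.e (P.lift (P.tOf s)) = s := by
  ext f
  rw [Finset.mem_insert, mem_lift]
  constructor
  · rintro (rfl | ⟨k, hk, rfl⟩)
    · exact he
    · exact P.mem_tOf.1 hk
  · intro hf
    by_cases hfe : f = P.e
    · exact Or.inl hfe
    · obtain ⟨k, hk⟩ := Fin.exists_succAbove_eq hfe
      exact Or.inr ⟨k, P.mem_tOf.2 (by rwa [show P.sA k = f from hk]), hk⟩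

lemma card_tOf' {s : Finset (Fin (P.n + 1))} (he : P.e ∈ s) :
    (P.tOf s).card + 1 = s.card := by
  have h1 : P.e ∉ P.lift (P.tOf s) := P.e_not_mem_lift _
  conv_rhs => rw [← P.insert_e_lift_tOf he]
  rw [Finset.card_insert_of_notMem h1, card_lift]

-- sign lemmas
lemma filter_lt_lift (t : Finset (Fin P.n)) (k : Fin P.n) :
    ((P.lift t).filter (· < P.sA k)).card = (t.filter (· < k)).card := by
  classical
  rw [lift, Finset.filter_map, Finset.card_map]
  congr 1
  ext k'
  simp only [Finset.mem_filter, Function.comp]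
  constructor
  · rintro ⟨h1, h2⟩
    exact ⟨h1, Fin.succAbove_lt_succAbove_iff.1 h2⟩
  · rintro ⟨h1, h2⟩
    exact ⟨h1, Fin.succAbove_lt_succAbove_iff.2 h2⟩

lemma filter_lt_insert_card {s : Finset (Fin (P.n + 1))} {f g : Fin (P.n + 1)}
    (hfs : f ∉ s) :
    ((insert f s).filter (· < g)).card =
      (s.filter (· < g)).card + if f < g then 1 else 0 := by
  classical
  rw [Finset.filter_insert]
  split_ifs with h
  · rw [Finset.card_insert_of_notMem (fun hc => hfs (Finset.mem_of_mem_filter _ hc))]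
  · rfl

end PSetup

namespace PSetup

open OGraph

variable (P : PSetup)

abbrev mkc (s : Finset (Fin (P.n + 1))) (u : P.V) : (P.G).Comp s :=
  Quot.mk ((P.G).rel s) u

abbrev mkc' (t : Finset (Fin P.n)) (q : (P.G').V) : (P.G').Comp t :=
  Quot.mk ((P.G').rel t) q

lemma rel_ne_v {s : Finset (Fin (P.n + 1))} (hs : P.e ∉ s) {u u' : P.V}
    (h : (P.G).rel s u u') : u ≠ P.v := by
  obtain ⟨f, hfs, hf⟩ := h
  rintro rfl
  have hv : P.v ∈ P.ends f := by rw [show P.ends f = _ from hf]; exact Sym2.mem_mk_left _ _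
  exact hs ((P.hdeg f hv) ▸ hfs)

lemma eqv_v_iff {s : Finset (Fin (P.n + 1))} (hs : P.e ∉ s) {x y : P.V}
    (h : Relation.EqvGen ((P.G).rel s) x y) : (x = P.v ↔ y = P.v) := by
  induction h with
  | rel a b hab =>
    have ha := P.rel_ne_v hs hab
    have hb := P.rel_ne_v hs (rel_symm hab)
    simp [ha, hb]
  | refl => exact Iff.rfl
  | symm _ _ _ ih => exact ih.symm
  | trans _ _ _ _ _ ih1 ih2 => exact ih1.trans ih2

lemma mk_eq_v_iff {s : Finset (Fin (P.n + 1))} (hs : P.e ∉ s) {u : P.V} :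
    P.mkc s u = P.mkc s P.v ↔ u = P.v := by
  constructor
  · intro h
    erw [Quot.eq] at h
    exact (P.eqv_v_iff hs h).2 rfl
  · rintro rfl; rfl

lemma rel_transfer {s : Finset (Fin (P.n + 1))} (hs : P.e ∉ s) {u u' : P.V}
    (h : (P.G).rel s u u') : (P.G').rel (P.tOf s) (P.φ u) (P.φ u') := by
  obtain ⟨f, hfs, hf⟩ := h
  have hfe : f ≠ P.e := fun h' => hs (h' ▸ hfs)
  obtain ⟨k, hk⟩ := Fin.exists_succAbove_eq hfe
  refine ⟨k, P.mem_tOf.2 (by rwa [show P.sA k = f from hk]), ?_⟩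
  show (P.ends (P.e.succAbove k)).map (Quot.mk _) = s(P.φ u, P.φ u')
  rw [show P.e.succAbove k = f from hk, show P.ends f = _ from hf, Sym2.map_pair_eq]
  rfl

noncomputable def Fmap {s : Finset (Fin (P.n + 1))} (hs : P.e ∉ s) :
    (P.G).Comp s → (P.G').Comp (P.tOf s) :=
  Quot.lift (fun u => P.mkc' (P.tOf s) (P.φ u))
    (fun _ _ hab => Quot.sound (P.rel_transfer hs hab))

lemma mk_phi_congr {s : Finset (Fin (P.n + 1))} (hs : P.e ∉ s) {u u' : P.V}
    (h : P.mkc s u = P.mkc s u') :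
    P.mkc' (P.tOf s) (P.φ u) = P.mkc' (P.tOf s) (P.φ u') :=
  congrArg (P.Fmap hs) h

lemma mk_of_phi {s : Finset (Fin (P.n + 1))} (hs : P.e ∉ s) {q q' : (P.G').V}
    (h : Relation.EqvGen ((P.G').rel (P.tOf s)) q q') :
    ∀ {u u' : P.V}, u ≠ P.v → u' ≠ P.v → P.φ u = q → P.φ u' = q' →
      P.mkc s u = P.mkc s u' := by
  induction h with
  | rel x y hxy =>
    intro u u' hu hu' hq hq'
    obtain ⟨k, hkt, hk⟩ := hxy
    obtain ⟨⟨a, b⟩, hab⟩ := (P.ends (P.sA k)).exists_rep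
    have hab' : P.ends (P.sA k) = s(a, b) := hab.symm
    have ha : a ≠ P.v := by
      rintro rfl
      exact P.v_not_mem_ends (P.sA_ne k) (hab' ▸ Sym2.mem_mk_left _ _)
    have hb : b ≠ P.v := by
      rintro rfl
      exact P.v_not_mem_ends (P.sA_ne k) (hab' ▸ Sym2.mem_mk_right _ _)
    have hk' : s(P.φ a, P.φ b) = s(x, y) := by
      rw [← hk]
      show s(P.φ a, P.φ b) = (P.ends (P.e.succAbove k)).map (Quot.mk _)
      rw [show P.ends (P.e.succAbove k) = s(a, b) from hab', Sym2.map_pair_eq]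
      rfl
    have hks : P.sA k ∈ s := P.mem_tOf.1 hkt
    rcases Sym2.eq_iff.1 hk' with ⟨h1, h2⟩ | ⟨h1, h2⟩
    · have hua : u = a := P.phi_inj hu ha (by rw [hq, ← h1])
      have hub : u' = b := P.phi_inj hu' hb (by rw [hq', ← h2])
      subst hua; subst hub
      exact Quot.sound ⟨P.sA k, hks, hab'⟩
    · have hua : u = b := P.phi_inj hu hb (by rw [hq, ← h2])
      have hub : u' = a := P.phi_inj hu' ha (by rw [hq', ← h1])
      subst hua; subst hub
      exact Quot.sound (rel_symm ⟨P.sA k, hks, hab'⟩)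
  | refl x =>
    intro u u' hu hu' hq hq'
    rw [P.phi_inj hu hu' (hq.trans hq'.symm)]
  | symm x y _ ih =>
    intro u u' hu hu' hq hq'
    exact (ih hu' hu hq' hq).symm
  | trans x y z _ _ ih1 ih2 =>
    intro u u' hu hu' hq hq'
    exact (ih1 hu (P.psi_ne y) hq (P.phi_psi y)).trans (ih2 (P.psi_ne y) hu' (P.phi_psi y) hq')

lemma mk_phi_iff {s : Finset (Fin (P.n + 1))} (hs : P.e ∉ s) {u u' : P.V}
    (hu : u ≠ P.v) (hu' : u' ≠ P.v) :
    P.mkc s u = P.mkc s u' ↔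
      P.mkc' (P.tOf s) (P.φ u) = P.mkc' (P.tOf s) (P.φ u') :=
  ⟨P.mk_phi_congr hs, fun h => P.mk_of_phi hs (Quot.eq.1 h) hu hu' rfl rfl⟩

lemma mk_v_w {s : Finset (Fin (P.n + 1))} (he : P.e ∈ s) :
    P.mkc s P.v = P.mkc s P.w := Quot.sound ⟨P.e, he, P.hvw⟩

lemma lift_tOf_subset {s : Finset (Fin (P.n + 1))} : P.lift (P.tOf s) ⊆ s := by
  intro f hf
  obtain ⟨k, hk, rfl⟩ := P.mem_lift.1 hf
  exact P.mem_tOf.1 hk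

lemma rel_transfer' {s : Finset (Fin (P.n + 1))} (he : P.e ∈ s) {u u' : P.V}
    (h : (P.G).rel s u u') :
    P.mkc' (P.tOf s) (P.φ u) = P.mkc' (P.tOf s) (P.φ u') := by
  obtain ⟨f, hfs, hf⟩ := h
  by_cases hfe : f = P.e
  · subst hfe
    have : s(P.v, P.w) = s(u, u') := by rw [← P.hvw]; exact hf
    have hphi : P.φ u = P.φ u' := by
      rcases Sym2.eq_iff.1 this with ⟨h1, h2⟩ | ⟨h1, h2⟩
      · rw [← h1, ← h2]; exact P.phi_vw
      · rw [← h1, ← h2]; exact P.phi_vw.symm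
    exact congrArg (Quot.mk _) hphi
  · obtain ⟨k, hk⟩ := Fin.exists_succAbove_eq hfe
    refine Quot.sound ⟨k, P.mem_tOf.2 (by rwa [show P.sA k = f from hk]), ?_⟩
    show (P.ends (P.e.succAbove k)).map (Quot.mk _) = s(P.φ u, P.φ u')
    rw [show P.e.succAbove k = f from hk, show P.ends f = _ from hf, Sym2.map_pair_eq]
    rfl

noncomputable def Fmap' {s : Finset (Fin (P.n + 1))} (he : P.e ∈ s) :
    (P.G).Comp s → (P.G').Comp (P.tOf s) :=
  Quot.lift (fun u => P.mkc' (P.tOf s) (P.φ u)) (fun _ _ hab => P.rel_transfer' he hab)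

lemma mk_phi_congr' {s : Finset (Fin (P.n + 1))} (he : P.e ∈ s) {u u' : P.V}
    (h : P.mkc s u = P.mkc s u') :
    P.mkc' (P.tOf s) (P.φ u) = P.mkc' (P.tOf s) (P.φ u') :=
  congrArg (P.Fmap' he) h

lemma mk_phi_iff' {s : Finset (Fin (P.n + 1))} (he : P.e ∈ s) {u u' : P.V} :
    P.mkc s u = P.mkc s u' ↔
      P.mkc' (P.tOf s) (P.φ u) = P.mkc' (P.tOf s) (P.φ u') := by
  refine ⟨P.mk_phi_congr' he, fun h => ?_⟩
  classical
  set u₀ : P.V := if u = P.v then P.w else u with hu₀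
  set u₀' : P.V := if u' = P.v then P.w else u' with hu₀'
  have hne0 : u₀ ≠ P.v := by
    rw [hu₀]; split_ifs with h'
    · exact Ne.symm P.hne
    · exact h'
  have hne0' : u₀' ≠ P.v := by
    rw [hu₀']; split_ifs with h'
    · exact Ne.symm P.hne
    · exact h'
  have hphi0 : P.φ u₀ = P.φ u := by
    rw [hu₀]; split_ifs with h'
    · rw [h']; exact P.phi_vw.symm
    · rfl
  have hphi0' : P.φ u₀' = P.φ u' := by
    rw [hu₀']; split_ifs with h'
    · rw [h']; exact P.phi_vw.symm
    · rfl
  have hmk0 : P.mkc s u = P.mkc s u₀ := by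
    rw [hu₀]; split_ifs with h'
    · rw [h']; exact P.mk_v_w he
    · rfl
  have hmk0' : P.mkc s u' = P.mkc s u₀' := by
    rw [hu₀']; split_ifs with h'
    · rw [h']; exact P.mk_v_w he
    · rfl
  have h' : P.mkc' (P.tOf s) (P.φ u₀) = P.mkc' (P.tOf s) (P.φ u₀') := by
    rw [hphi0, hphi0']; exact h
  -- move to the set `lift (tOf s)`
  have hs0 : P.e ∉ P.lift (P.tOf s) := P.e_not_mem_lift _
  have h'' : P.mkc' (P.tOf (P.lift (P.tOf s))) (P.φ u₀) =
      P.mkc' (P.tOf (P.lift (P.tOf s))) (P.φ u₀') := by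
    erw [mk_eq_congr (X := P.G') (P.tOf_lift (P.tOf s))]; exact h'
  have h3 : P.mkc (P.lift (P.tOf s)) u₀ = P.mkc (P.lift (P.tOf s)) u₀' :=
    (P.mk_phi_iff hs0 hne0 hne0').2 h''
  exact hmk0.trans ((mk_mono P.lift_tOf_subset h3).trans hmk0'.symm)

end PSetup

namespace PSetup

open OGraph

variable (P : PSetup)

def cRes {s : Finset (Fin (P.n + 1))} (c : (P.G).Comp s → Prop) :
    (P.G').Comp (P.tOf s) → Prop :=
  fun K => ∃ u, u ≠ P.v ∧ P.mkc' (P.tOf s) (P.φ u) = K ∧ c (P.mkc s u)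

lemma cRes_eval {s : Finset (Fin (P.n + 1))} (hs : P.e ∉ s) (c : (P.G).Comp s → Prop)
    {u : P.V} (hu : u ≠ P.v) :
    P.cRes c (P.mkc' (P.tOf s) (P.φ u)) ↔ c (P.mkc s u) := by
  constructor
  · rintro ⟨u', hu', hq, hc⟩
    rwa [show P.mkc s u' = P.mkc s u from (P.mk_phi_iff hs hu' hu).2 hq] at hc
  · intro hc
    exact ⟨u, hu, rfl, hc⟩

def cSx {t : Finset (Fin P.n)} (c : (P.G').Comp t → Prop) :
    (P.G).Comp (P.lift t) → Prop :=
  fun K => K = P.mkc (P.lift t) P.v ∨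
    ∃ u, u ≠ P.v ∧ P.mkc (P.lift t) u = K ∧ c (P.mkc' t (P.φ u))

lemma cSx_v {t : Finset (Fin P.n)} (c : (P.G').Comp t → Prop) :
    P.cSx c (P.mkc (P.lift t) P.v) := Or.inl rfl

lemma cSx_eval {t : Finset (Fin P.n)} (c : (P.G').Comp t → Prop) {u : P.V}
    (hu : u ≠ P.v) :
    P.cSx c (P.mkc (P.lift t) u) ↔ c (P.mkc' t (P.φ u)) := by
  constructor
  · rintro (h | ⟨u', hu', hm, hc⟩)
    · exact absurd ((P.mk_eq_v_iff (P.e_not_mem_lift t)).1 h) hu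
    · have h2 := P.mk_phi_congr (P.e_not_mem_lift t) hm
      erw [mk_eq_congr (X := P.G') (P.tOf_lift t)] at h2
      rwa [show P.mkc' t (P.φ u') = P.mkc' t (P.φ u) from h2] at hc
  · intro hc
    exact Or.inr ⟨u, hu, rfl, hc⟩

def cS1 {t : Finset (Fin P.n)} (c : (P.G').Comp t → Prop) :
    (P.G).Comp (P.lift t) → Prop :=
  fun K => ∃ u, u ≠ P.v ∧ P.mkc (P.lift t) u = K ∧
    (c (P.mkc' t (P.φ u)) ∨ P.mkc' t (P.φ u) = P.mkc' t (P.φ P.w))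

lemma cS1_v {t : Finset (Fin P.n)} (c : (P.G').Comp t → Prop) :
    ¬ P.cS1 c (P.mkc (P.lift t) P.v) := by
  rintro ⟨u, hu, hm, _⟩
  exact hu ((P.mk_eq_v_iff (P.e_not_mem_lift t)).1 hm)

lemma cS1_eval {t : Finset (Fin P.n)} (c : (P.G').Comp t → Prop) {u : P.V}
    (hu : u ≠ P.v) :
    P.cS1 c (P.mkc (P.lift t) u) ↔
      (c (P.mkc' t (P.φ u)) ∨ P.mkc' t (P.φ u) = P.mkc' t (P.φ P.w)) := by
  constructor
  · rintro ⟨u', hu', hm, hc⟩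
    have h2 := P.mk_phi_congr (P.e_not_mem_lift t) hm
    erw [mk_eq_congr (X := P.G') (P.tOf_lift t)] at h2
    rwa [show P.mkc' t (P.φ u') = P.mkc' t (P.φ u) from h2] at hc
  · intro hc
    exact ⟨u, hu, rfl, hc⟩

def cTil {s : Finset (Fin (P.n + 1))} (c : (P.G).Comp s → Prop) :
    (P.G).Comp (P.lift (P.tOf s)) → Prop :=
  fun K => ∃ u, u ≠ P.v ∧ P.mkc (P.lift (P.tOf s)) u = K ∧ c (P.mkc s u)

lemma cTil_v {s : Finset (Fin (P.n + 1))} (c : (P.G).Comp s → Prop) :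
    ¬ P.cTil c (P.mkc (P.lift (P.tOf s)) P.v) := by
  rintro ⟨u, hu, hm, _⟩
  exact hu ((P.mk_eq_v_iff (P.e_not_mem_lift _)).1 hm)

lemma mk_lift_tOf_iff {s : Finset (Fin (P.n + 1))} (he : P.e ∈ s) {u u' : P.V}
    (hu : u ≠ P.v) (hu' : u' ≠ P.v) :
    P.mkc (P.lift (P.tOf s)) u = P.mkc (P.lift (P.tOf s)) u' ↔
      P.mkc s u = P.mkc s u' := by
  constructor
  · exact mk_mono P.lift_tOf_subset
  · intro h
    have h2 := P.mk_phi_congr' he h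
    erw [← mk_eq_congr (X := P.G') (P.tOf_lift (P.tOf s))] at h2
    exact (P.mk_phi_iff (P.e_not_mem_lift _) hu hu').2 h2

lemma cTil_eval {s : Finset (Fin (P.n + 1))} (he : P.e ∈ s) (c : (P.G).Comp s → Prop)
    {u : P.V} (hu : u ≠ P.v) :
    P.cTil c (P.mkc (P.lift (P.tOf s)) u) ↔ c (P.mkc s u) := by
  constructor
  · rintro ⟨u', hu', hm, hc⟩
    rwa [show P.mkc s u' = P.mkc s u from (P.mk_lift_tOf_iff he hu' hu).1 hm] at hc
  · intro hc
    exact ⟨u, hu, rfl, hc⟩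

open Classical in
noncomputable def piS (S : (P.G).EState) : (P.G').EState →₀ ℤ :=
  if P.e ∈ S.1 then 0
  else if S.2 (P.mkc S.1 P.v) then Finsupp.single ⟨P.tOf S.1, P.cRes S.2⟩ 1 else 0

noncomputable def iotaS (T : (P.G').EState) : (P.G).EState →₀ ℤ :=
  Finsupp.single ⟨P.lift T.1, P.cSx T.2⟩ 1 -
    (open Classical in
      if T.2 (P.mkc' T.1 (P.φ P.w)) then 0 else Finsupp.single ⟨P.lift T.1, P.cS1 T.2⟩ 1)

open Classical in
noncomputable def hS (S : (P.G).EState) : (P.G).EState →₀ ℤ :=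
  if P.e ∈ S.1 then
    (-((-1 : ℤ) ^ ((S.1.filter (· < P.e)).card))) •
      Finsupp.single ⟨P.lift (P.tOf S.1), P.cTil S.2⟩ 1
  else 0

noncomputable def piL : ((P.G).EState →₀ ℤ) →ₗ[ℤ] ((P.G').EState →₀ ℤ) := stm P.piS

noncomputable def iotaL : ((P.G').EState →₀ ℤ) →ₗ[ℤ] ((P.G).EState →₀ ℤ) := stm P.iotaS

noncomputable def hL : ((P.G).EState →₀ ℤ) →ₗ[ℤ] ((P.G).EState →₀ ℤ) := stm P.hS

lemma piL_single (S : (P.G).EState) : P.piL (Finsupp.single S 1) = P.piS S :=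
  stm_single _ _

lemma iotaL_single (T : (P.G').EState) : P.iotaL (Finsupp.single T 1) = P.iotaS T :=
  stm_single _ _

lemma hL_single (S : (P.G).EState) : P.hL (Finsupp.single S 1) = P.hS S :=
  stm_single _ _

lemma piS_of_mem {S : (P.G).EState} (he : P.e ∈ S.1) : P.piS S = 0 := by
  rw [piS, if_pos he]

lemma piS_of_not_colored {S : (P.G).EState} (he : P.e ∉ S.1)
    (hcv : ¬ S.2 (P.mkc S.1 P.v)) : P.piS S = 0 := by
  rw [piS, if_neg he, if_neg hcv]

lemma piS_of_colored {S : (P.G).EState} (he : P.e ∉ S.1)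
    (hcv : S.2 (P.mkc S.1 P.v)) :
    P.piS S = Finsupp.single ⟨P.tOf S.1, P.cRes S.2⟩ 1 := by
  rw [piS, if_neg he, if_pos hcv]

lemma hS_of_not_mem {S : (P.G).EState} (he : P.e ∉ S.1) : P.hS S = 0 := by
  rw [hS, if_neg he]

lemma hS_of_mem {S : (P.G).EState} (he : P.e ∈ S.1) :
    P.hS S = (-((-1 : ℤ) ^ ((S.1.filter (· < P.e)).card))) •
      Finsupp.single ⟨P.lift (P.tOf S.1), P.cTil S.2⟩ 1 := by
  rw [hS, if_pos he]

end PSetup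

namespace PSetup

open OGraph

variable (P : PSetup)

lemma sA_ends (k : Fin P.n) :
    ∃ a b, P.ends (P.sA k) = s(a, b) ∧ a ≠ P.v ∧ b ≠ P.v := by
  obtain ⟨⟨a, b⟩, hab⟩ := (P.ends (P.sA k)).exists_rep
  have hab' : P.ends (P.sA k) = s(a, b) := hab.symm
  refine ⟨a, b, hab', ?_, ?_⟩
  · rintro rfl
    exact P.v_not_mem_ends (P.sA_ne k) (hab' ▸ Sym2.mem_mk_left _ _)
  · rintro rfl
    exact P.v_not_mem_ends (P.sA_ne k) (hab' ▸ Sym2.mem_mk_right _ _)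

lemma ends'_pair {k : Fin P.n} {a b : P.V} (hab : P.ends (P.sA k) = s(a, b)) :
    (P.G').ends k = s(P.φ a, P.φ b) := by
  show (P.ends (P.e.succAbove k)).map (Quot.mk _) = s(P.φ a, P.φ b)
  rw [show P.ends (P.e.succAbove k) = s(a, b) from hab, Sym2.map_pair_eq]
  rfl

lemma sign_transfer {s : Finset (Fin (P.n + 1))} (hs : P.e ∉ s) (k : Fin P.n) :
    (s.filter (· < P.sA k)).card = ((P.tOf s).filter (· < k)).card := by
  conv_lhs => rw [← P.lift_tOf hs]
  exact P.filter_lt_lift _ k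

lemma mk_v_ne_w {s : Finset (Fin (P.n + 1))} (hs : P.e ∉ s) :
    P.mkc s P.v ≠ P.mkc s P.w :=
  fun h => P.hne (((P.mk_eq_v_iff hs).1 h.symm).symm ▸ rfl)

lemma key_pi_e {s : Finset (Fin (P.n + 1))} (hs : P.e ∉ s) (c : (P.G).Comp s → Prop) :
    P.piL ((P.G).addEdge ⟨s, c⟩ P.e) = 0 := by
  rw [addEdge_eq P.hvw hs]
  split_ifs with h
  · simp
  · rw [piL_single, P.piS_of_mem (Finset.mem_insert_self _ _)]

lemma key_pi_k0 {s : Finset (Fin (P.n + 1))} (hs : P.e ∉ s) (c : (P.G).Comp s → Prop)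
    (hcv : ¬ c (P.mkc s P.v)) (k : Fin P.n) :
    P.piL ((P.G).addEdge ⟨s, c⟩ (P.sA k)) = 0 := by
  by_cases hks : P.sA k ∈ s
  · rw [addEdge_of_mem _ hks, map_zero]
  · obtain ⟨a, b, hab, ha, hb⟩ := P.sA_ends k
    rw [addEdge_eq hab hks]
    split_ifs with h
    · simp
    · rw [piL_single]
      refine piS_of_not_colored _ ?_ ?_
      · intro hmem
        rcases Finset.mem_insert.1 hmem with h1 | h1
        · exact P.sA_ne k h1.symm
        · exact hs h1
      · intro hcol
        rcases (pushc_eval (X := P.G) hab P.v).1 hcol with h1 | ⟨h1 | h1, _⟩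
        · exact hcv h1
        · exact ha ((P.mk_eq_v_iff hs).1 h1.symm)
        · exact hb ((P.mk_eq_v_iff hs).1 h1.symm)

lemma key_pi_k {s : Finset (Fin (P.n + 1))} (hs : P.e ∉ s) (c : (P.G).Comp s → Prop)
    (hcv : c (P.mkc s P.v)) (k : Fin P.n) :
    P.piL ((P.G).addEdge ⟨s, c⟩ (P.sA k)) = (P.G').addEdge ⟨P.tOf s, P.cRes c⟩ k := by
  by_cases hks : P.sA k ∈ s
  · erw [addEdge_of_mem _ hks, addEdge_of_mem (X := P.G') ⟨P.tOf s, P.cRes c⟩ (P.mem_tOf.2 hks), map_zero]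
  · obtain ⟨a, b, hab, ha, hb⟩ := P.sA_ends k
    have hab' : (P.G').ends k = s(P.φ a, P.φ b) := P.ends'_pair hab
    have hks' : k ∉ P.tOf s := fun h => hks (P.mem_tOf.1 h)
    have hsk : P.e ∉ insert (P.sA k) s := by
      intro hmem
      rcases Finset.mem_insert.1 hmem with h1 | h1
      · exact P.sA_ne k h1.symm
      · exact hs h1
    rw [addEdge_eq hab hks, addEdge_eq hab' hks']
    classical
    have hcond : (P.mkc s a ≠ P.mkc s b ∧ c (P.mkc s a) ∧ c (P.mkc s b)) ↔
        (@Ne (Quot ((P.G').rel (P.tOf s))) (P.mkc' (P.tOf s) (P.φ a)) (P.mkc' (P.tOf s) (P.φ b)) ∧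
          P.cRes c (P.mkc' (P.tOf s) (P.φ a)) ∧ P.cRes c (P.mkc' (P.tOf s) (P.φ b))) :=
      and_congr (not_congr (P.mk_phi_iff hs ha hb))
        (and_congr (P.cRes_eval hs c ha).symm (P.cRes_eval hs c hb).symm)
    erw [if_congr hcond rfl rfl]
    split_ifs with h
    · simp
    · erw [piL_single]
      have hcol := (pushc_eval (X := P.G) (c := c) hab P.v).2 (Or.inl hcv)
      rw [P.piS_of_colored hsk hcol]
      congr 1
      refine estate_eq (X := P.G') P.tOf_insert_sA ?_
      intro q
      rw [← P.phi_psi q]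
      rw [P.cRes_eval hsk _ (P.psi_ne q)]
      dsimp only
      erw [pushc_eval (X := P.G) hab (P.ψ q), pushc_eval (X := P.G') hab' (P.φ (P.ψ q))]
      erw [P.cRes_eval hs c ha, P.cRes_eval hs c hb, P.cRes_eval hs c (P.psi_ne q)]
      erw [← P.mk_phi_iff hs (P.psi_ne q) ha, ← P.mk_phi_iff hs (P.psi_ne q) hb]
      rfl

lemma pi_iota (T : (P.G').EState) : P.piL (P.iotaS T) = Finsupp.single T 1 := by
  obtain ⟨t, c⟩ := T
  rw [iotaS, map_sub]
  have h2 : P.piL (open Classical in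
      if c (P.mkc' t (P.φ P.w)) then 0
      else Finsupp.single ⟨P.lift t, P.cS1 c⟩ 1) = 0 := by
    split_ifs with h
    · simp
    · rw [piL_single, P.piS_of_not_colored (P.e_not_mem_lift t) (P.cS1_v c)]
  rw [h2, sub_zero, piL_single, P.piS_of_colored (P.e_not_mem_lift t) (P.cSx_v c)]
  congr 1
  refine estate_eq (X := P.G') (P.tOf_lift t) ?_
  intro q
  rw [← P.phi_psi q]
  exact (P.cRes_eval (P.e_not_mem_lift t) _ (P.psi_ne q)).trans (P.cSx_eval c (P.psi_ne q))

lemma pi_chain (S : (P.G).EState) :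
    P.piL ((P.G).dState S) = (P.G').diff (P.piS S) := by
  obtain ⟨s, c⟩ := S
  by_cases hes : P.e ∈ s
  · rw [P.piS_of_mem hes, map_zero, OGraph.dState, map_sum]
    refine Finset.sum_eq_zero fun f _ => ?_
    rw [map_smul]
    by_cases hfs : f ∈ s
    · rw [addEdge_of_mem _ hfs, map_zero, smul_zero]
    · rw [addEdge_of_not_mem _ hfs]
      split_ifs with h
      · simp
      · rw [piL_single, P.piS_of_mem (Finset.mem_insert_of_mem hes), smul_zero]
  · by_cases hcv : c (P.mkc s P.v)
    · rw [P.piS_of_colored hes hcv, diff_single]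
      simp only [OGraph.dState, map_sum, map_smul]
      rw [Fin.sum_univ_succAbove
        (fun f => ((-1 : ℤ) ^ (s.filter (· < f)).card) • P.piL ((P.G).addEdge ⟨s, c⟩ f)) P.e]
      rw [P.key_pi_e hes c, smul_zero, zero_add]
      refine Finset.sum_congr rfl fun k _ => ?_
      rw [P.key_pi_k hes c hcv k, P.sign_transfer hes k]
      rfl
    · rw [P.piS_of_not_colored hes hcv, map_zero]
      simp only [OGraph.dState, map_sum, map_smul]
      rw [Fin.sum_univ_succAbove
        (fun f => ((-1 : ℤ) ^ (s.filter (· < f)).card) • P.piL ((P.G).addEdge ⟨s, c⟩ f)) P.e]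
      rw [P.key_pi_e hes c, smul_zero, zero_add]
      refine Finset.sum_eq_zero fun k _ => ?_
      rw [P.key_pi_k0 hes c hcv k, smul_zero]

end PSetup

namespace PSetup

open OGraph

variable (P : PSetup)

lemma hw_ne (P : PSetup) : P.w ≠ P.v := Ne.symm P.hne

lemma mk_lift_iff (t : Finset (Fin P.n)) {u u' : P.V} (hu : u ≠ P.v) (hu' : u' ≠ P.v) :
    P.mkc (P.lift t) u = P.mkc (P.lift t) u' ↔
      P.mkc' t (P.φ u) = P.mkc' t (P.φ u') :=
  (P.mk_phi_iff (P.e_not_mem_lift t) hu hu').trans (mk_eq_congr (P.tOf_lift t))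

lemma mk_lift_v_iff (t : Finset (Fin P.n)) {u : P.V} (hu : u ≠ P.v) :
    (P.mkc (P.lift t) P.v = P.mkc (P.lift t) u) ↔ False :=
  iff_false_intro (fun h => hu ((P.mk_eq_v_iff (P.e_not_mem_lift t)).1 h.symm))

lemma iota_e_x {t : Finset (Fin P.n)} {c : (P.G').Comp t → Prop}
    (hcw : c (P.mkc' t (P.φ P.w))) :
    (P.G).addEdge ⟨P.lift t, P.cSx c⟩ P.e = 0 := by
  rw [addEdge_eq (X := P.G) P.hvw (P.e_not_mem_lift t)]
  rw [if_pos ⟨P.mk_v_ne_w (P.e_not_mem_lift t), P.cSx_v c,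
    (P.cSx_eval c P.hw_ne).2 hcw⟩]

lemma iota_e_1 {t : Finset (Fin P.n)} {c : (P.G').Comp t → Prop}
    (hcw : ¬ c (P.mkc' t (P.φ P.w))) :
    (P.G).addEdge ⟨P.lift t, P.cSx c⟩ P.e = (P.G).addEdge ⟨P.lift t, P.cS1 c⟩ P.e := by
  rw [addEdge_eq (X := P.G) P.hvw (P.e_not_mem_lift t),
    addEdge_eq (X := P.G) P.hvw (P.e_not_mem_lift t)]
  rw [if_neg (fun hc => hcw ((P.cSx_eval c P.hw_ne).1 hc.2.2)),
    if_neg (fun hc => P.cS1_v c hc.2.1)]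
  congr 1
  refine estate_ext (X := P.G) ?_
  intro u₁
  by_cases hu : u₁ = P.v
  · subst hu
    refine iff_of_true ?_ ?_
    · exact (pushc_eval (X := P.G) (c := P.cSx c) P.hvw P.v).2
        (Or.inr ⟨Or.inl rfl, Or.inl (P.cSx_v c)⟩)
    · refine (pushc_eval (X := P.G) (c := P.cS1 c) P.hvw P.v).2
        (Or.inr ⟨Or.inl rfl, Or.inr ((P.cS1_eval c P.hw_ne).2 (Or.inr rfl))⟩)
  · rw [pushc_eval (X := P.G) (c := P.cSx c) P.hvw u₁,
      pushc_eval (X := P.G) (c := P.cS1 c) P.hvw u₁]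
    rw [P.cSx_eval c hu, P.cS1_eval c hu, P.cSx_eval c P.hw_ne, P.cS1_eval c P.hw_ne]
    erw [show (P.mkc (P.lift t) u₁ = P.mkc (P.lift t) P.v) ↔ False from
      iff_false_intro (fun h => hu ((P.mk_eq_v_iff (P.e_not_mem_lift t)).1 h))]
    erw [P.mk_lift_iff t hu P.hw_ne]
    have hsxv := P.cSx_v c
    have hs1v := P.cS1_v c
    have hrfl : P.mkc' t (P.φ P.w) = P.mkc' t (P.φ P.w) := rfl
    tauto

lemma stateSx {t : Finset (Fin P.n)} (c : (P.G').Comp t → Prop) {k : Fin P.n}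
    {a b : P.V} (hab : P.ends (P.sA k) = s(a, b)) (ha : a ≠ P.v) (hb : b ≠ P.v) :
    (⟨insert (P.sA k) (P.lift t), pushc (X := P.G) ⟨P.lift t, P.cSx c⟩ (P.sA k)⟩ :
        (P.G).EState) =
      ⟨P.lift (insert k t), P.cSx (pushc (X := P.G') ⟨t, c⟩ k)⟩ := by
  have hab' := P.ends'_pair hab
  refine estate_eq (X := P.G) (P.lift_insert t k).symm ?_
  intro u₁
  by_cases hu : u₁ = P.v
  · subst hu
    exact iff_of_true
      ((pushc_eval (X := P.G) (c := P.cSx c) hab P.v).2 (Or.inl (P.cSx_v c)))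
      (P.cSx_v _)
  · erw [pushc_eval (X := P.G) (c := P.cSx c) hab u₁,
      P.cSx_eval (pushc (X := P.G') ⟨t, c⟩ k) hu,
      pushc_eval (X := P.G') (c := c) hab' (P.φ u₁),
      P.cSx_eval c hu, P.cSx_eval c ha, P.cSx_eval c hb,
      P.mk_lift_iff t hu ha, P.mk_lift_iff t hu hb]
    rfl

lemma stateS1 {t : Finset (Fin P.n)} (c : (P.G').Comp t → Prop) {k : Fin P.n}
    {a b : P.V} (hab : P.ends (P.sA k) = s(a, b)) (ha : a ≠ P.v) (hb : b ≠ P.v) :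
    (⟨insert (P.sA k) (P.lift t), pushc (X := P.G) ⟨P.lift t, P.cS1 c⟩ (P.sA k)⟩ :
        (P.G).EState) =
      ⟨P.lift (insert k t), P.cS1 (pushc (X := P.G') ⟨t, c⟩ k)⟩ := by
  have hab' := P.ends'_pair hab
  refine estate_eq (X := P.G) (P.lift_insert t k).symm ?_
  intro u₁
  by_cases hu : u₁ = P.v
  · subst hu
    refine iff_of_false ?_ (P.cS1_v _)
    intro hc
    rcases (pushc_eval (X := P.G) (c := P.cS1 c) hab P.v).1 hc with h1 | ⟨h1 | h1, _⟩
    · exact P.cS1_v c h1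
    · exact ha ((P.mk_eq_v_iff (P.e_not_mem_lift t)).1 h1.symm)
    · exact hb ((P.mk_eq_v_iff (P.e_not_mem_lift t)).1 h1.symm)
  · erw [pushc_eval (X := P.G) (c := P.cS1 c) hab u₁,
      P.cS1_eval (pushc (X := P.G') ⟨t, c⟩ k) hu,
      pushc_eval (X := P.G') (c := c) hab' (P.φ u₁),
      mk_insert_iff (X := P.G') hab' (u := P.φ u₁) (u' := P.φ P.w),
      P.cS1_eval c hu, P.cS1_eval c ha, P.cS1_eval c hb,
      P.mk_lift_iff t hu ha, P.mk_lift_iff t hu hb]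
    have e1 : (P.mkc' t (P.φ P.w) = P.mkc' t (P.φ a)) ↔
        (P.mkc' t (P.φ a) = P.mkc' t (P.φ P.w)) := eq_comm
    have e2 : (P.mkc' t (P.φ P.w) = P.mkc' t (P.φ b)) ↔
        (P.mkc' t (P.φ b) = P.mkc' t (P.φ P.w)) := eq_comm
    erw [e1, e2]
    tauto

open Classical in
lemma key_iota (t : Finset (Fin P.n)) (c : (P.G').Comp t → Prop) (k : Fin P.n) :
    P.iotaL ((P.G').addEdge ⟨t, c⟩ k) =
      (P.G).addEdge ⟨P.lift t, P.cSx c⟩ (P.sA k) -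
        (if c (P.mkc' t (P.φ P.w)) then 0
         else (P.G).addEdge ⟨P.lift t, P.cS1 c⟩ (P.sA k)) := by
  classical
  by_cases hkt : k ∈ t
  · rw [addEdge_of_mem (X := P.G') ⟨t, c⟩ hkt,
      addEdge_of_mem (X := P.G) ⟨P.lift t, P.cSx c⟩ ((P.sA_mem_lift).2 hkt),
      addEdge_of_mem (X := P.G) ⟨P.lift t, P.cS1 c⟩ ((P.sA_mem_lift).2 hkt), map_zero]
    split_ifs <;> simp
  · obtain ⟨a, b, hab, ha, hb⟩ := P.sA_ends k
    have hab' := P.ends'_pair hab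
    have hkl : P.sA k ∉ P.lift t := fun h => hkt (P.sA_mem_lift.1 h)
    rw [addEdge_eq (X := P.G') hab' hkt,
      addEdge_eq (X := P.G) (c := P.cSx c) hab hkl,
      addEdge_eq (X := P.G) (c := P.cS1 c) hab hkl]
    -- canonical conditions
    have hcondX : (P.mkc (P.lift t) a ≠ P.mkc (P.lift t) b ∧
        P.cSx c (P.mkc (P.lift t) a) ∧ P.cSx c (P.mkc (P.lift t) b)) ↔
        (P.mkc' t (P.φ a) ≠ P.mkc' t (P.φ b) ∧
          c (P.mkc' t (P.φ a)) ∧ c (P.mkc' t (P.φ b))) :=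
      and_congr (not_congr (P.mk_lift_iff t ha hb))
        (and_congr (P.cSx_eval c ha) (P.cSx_eval c hb))
    have hcond1 : (P.mkc (P.lift t) a ≠ P.mkc (P.lift t) b ∧
        P.cS1 c (P.mkc (P.lift t) a) ∧ P.cS1 c (P.mkc (P.lift t) b)) ↔
        (P.mkc' t (P.φ a) ≠ P.mkc' t (P.φ b) ∧
          (c (P.mkc' t (P.φ a)) ∨ P.mkc' t (P.φ a) = P.mkc' t (P.φ P.w)) ∧
          (c (P.mkc' t (P.φ b)) ∨ P.mkc' t (P.φ b) = P.mkc' t (P.φ P.w))) :=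
      and_congr (not_congr (P.mk_lift_iff t ha hb))
        (and_congr (P.cS1_eval c ha) (P.cS1_eval c hb))
    erw [if_congr hcondX rfl rfl, if_congr hcond1 rfl rfl]
    rw [stateSx P c hab ha hb, stateS1 P c hab ha hb]
    by_cases hG : (P.mkc' t (P.φ a) ≠ P.mkc' t (P.φ b) ∧
        c (P.mkc' t (P.φ a)) ∧ c (P.mkc' t (P.φ b)))
    · erw [if_pos hG, map_zero]
      by_cases hcw : c (P.mkc' t (P.φ P.w))
      · rw [if_pos hcw, if_pos hG, sub_zero]
      · rw [if_neg hcw, if_pos hG, zero_sub]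
        rw [if_pos ⟨hG.1, Or.inl hG.2.1, Or.inl hG.2.2⟩, neg_zero]
    · erw [if_neg hG, iotaL_single, iotaS]
      by_cases hcw : c (P.mkc' t (P.φ P.w))
      · have hpw : (pushc (X := P.G') (⟨t, c⟩ : (P.G').EState) k)
            (P.mkc' (insert k t) (P.φ P.w)) :=
          (pushc_eval (X := P.G') (c := c) hab' (P.φ P.w)).2 (Or.inl hcw)
        erw [if_pos hpw, sub_zero, if_pos hcw, sub_zero, if_neg hG]
        rfl
      · -- condition on the new w-component vs cond1
        have hWa : (P.mkc' t (P.φ a) = P.mkc' t (P.φ P.w)) →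
            (c (P.mkc' t (P.φ a)) ↔ c (P.mkc' t (P.φ P.w))) := fun h => by rw [h]
        have hWb : (P.mkc' t (P.φ b) = P.mkc' t (P.φ P.w)) →
            (c (P.mkc' t (P.φ b)) ↔ c (P.mkc' t (P.φ P.w))) := fun h => by rw [h]
        have hWab : (P.mkc' t (P.φ a) = P.mkc' t (P.φ P.w)) →
            (P.mkc' t (P.φ b) = P.mkc' t (P.φ P.w)) →
            (P.mkc' t (P.φ a) = P.mkc' t (P.φ b)) := fun h1 h2 => h1.trans h2.symm
        have hpw : (pushc (X := P.G') (⟨t, c⟩ : (P.G').EState) k)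
              (P.mkc' (insert k t) (P.φ P.w)) ↔
            (P.mkc' t (P.φ a) ≠ P.mkc' t (P.φ b) ∧
              (c (P.mkc' t (P.φ a)) ∨ P.mkc' t (P.φ a) = P.mkc' t (P.φ P.w)) ∧
              (c (P.mkc' t (P.φ b)) ∨ P.mkc' t (P.φ b) = P.mkc' t (P.φ P.w))) := by
          erw [pushc_eval (X := P.G') (c := c) hab' (P.φ P.w)]
          have e1 : (P.mkc' t (P.φ P.w) = P.mkc' t (P.φ a)) ↔
              (P.mkc' t (P.φ a) = P.mkc' t (P.φ P.w)) := eq_comm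
          have e2 : (P.mkc' t (P.φ P.w) = P.mkc' t (P.φ b)) ↔
              (P.mkc' t (P.φ b) = P.mkc' t (P.φ P.w)) := eq_comm
          erw [e1, e2]
          have hEab : (P.mkc' t (P.φ a) = P.mkc' t (P.φ b)) →
              (c (P.mkc' t (P.φ a)) ↔ c (P.mkc' t (P.φ b))) := fun h => by rw [h]
          constructor
          · rintro (h | ⟨hW | hW, hA | hB⟩)
            · exact absurd h hcw
            · exact absurd ((hWa hW).1 hA) hcw
            · refine ⟨fun hE => hcw ((hWa hW).1 ((hEab hE).2 hB)), Or.inr hW, Or.inl hB⟩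
            · refine ⟨fun hE => hcw ((hWb hW).1 ((hEab hE).1 hA)), Or.inl hA, Or.inr hW⟩
            · exact absurd ((hWb hW).1 hB) hcw
          · rintro ⟨hD, hA | hA, hB | hB⟩
            · exact absurd ⟨hD, hA, hB⟩ hG
            · exact Or.inr ⟨Or.inr hB, Or.inl hA⟩
            · exact Or.inr ⟨Or.inl hA, Or.inr hB⟩
            · exact absurd (hWab hA hB) hD
        erw [if_congr hpw rfl rfl, if_neg hcw, if_neg hG]
        rfl
  done

lemma iota_chain (T : (P.G').EState) :
    P.iotaL ((P.G').dState T) = (P.G).diff (P.iotaS T) := by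
  classical
  obtain ⟨t, c⟩ := T
  by_cases hcw : c (P.mkc' t (P.φ P.w))
  · rw [iotaS, if_pos hcw, sub_zero, diff_single]
    simp only [OGraph.dState, map_sum, map_smul]
    rw [Fin.sum_univ_succAbove (fun f => ((-1 : ℤ) ^ ((P.lift t).filter (· < f)).card) •
      (P.G).addEdge ⟨P.lift t, P.cSx c⟩ f) P.e]
    rw [P.iota_e_x hcw, smul_zero, zero_add]
    refine Finset.sum_congr rfl fun k _ => ?_
    rw [P.key_iota t c k, if_pos hcw, sub_zero, P.filter_lt_lift t k]
    rfl
  · rw [iotaS, if_neg hcw, map_sub, diff_single, diff_single]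
    simp only [OGraph.dState, map_sum, map_smul]
    rw [Fin.sum_univ_succAbove (fun f => ((-1 : ℤ) ^ ((P.lift t).filter (· < f)).card) •
      (P.G).addEdge ⟨P.lift t, P.cSx c⟩ f) P.e]
    rw [Fin.sum_univ_succAbove (fun f => ((-1 : ℤ) ^ ((P.lift t).filter (· < f)).card) •
      (P.G).addEdge ⟨P.lift t, P.cS1 c⟩ f) P.e]
    rw [P.iota_e_1 hcw, add_sub_add_left_eq_sub, ← Finset.sum_sub_distrib]
    refine Finset.sum_congr rfl fun k _ => ?_
    rw [P.key_iota t c k, if_neg hcw, P.filter_lt_lift t k, smul_sub]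
    rfl

end PSetup

namespace PSetup

open OGraph

variable (P : PSetup)

lemma neg_pow_mul_self (ν : ℕ) : ((-1 : ℤ) ^ ν) * (-((-1 : ℤ) ^ ν)) = -1 := by
  rw [mul_neg, ← pow_add, Even.neg_one_pow ⟨ν, rfl⟩]

lemma neg_pow_mul_self' (ν : ℕ) : (-((-1 : ℤ) ^ ν)) * ((-1 : ℤ) ^ ν) = -1 := by
  rw [neg_mul, ← pow_add, Even.neg_one_pow ⟨ν, rfl⟩]

lemma filter_e_insert_e (s : Finset (Fin (P.n + 1))) :
    ((insert P.e s).filter (· < P.e)) = s.filter (· < P.e) := by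
  classical
  rw [Finset.filter_insert, if_neg (lt_irrefl P.e)]

lemma filter_lift_tOf_e {s : Finset (Fin (P.n + 1))} (he : P.e ∈ s) :
    ((P.lift (P.tOf s)).filter (· < P.e)).card = (s.filter (· < P.e)).card := by
  conv_rhs => rw [← P.insert_e_lift_tOf he]
  rw [P.filter_e_insert_e]

lemma state_Sx_res {s : Finset (Fin (P.n + 1))} (hs : P.e ∉ s) (c : (P.G).Comp s → Prop)
    (hcv : c (P.mkc s P.v)) :
    (⟨P.lift (P.tOf s), P.cSx (P.cRes c)⟩ : (P.G).EState) = ⟨s, c⟩ := by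
  refine estate_eq (X := P.G) (P.lift_tOf hs) ?_
  intro u₁
  by_cases hu : u₁ = P.v
  · subst hu
    exact iff_of_true (P.cSx_v _) hcv
  · rw [P.cSx_eval _ hu, P.cRes_eval hs c hu]

lemma state_til_U_A {s : Finset (Fin (P.n + 1))} (hs : P.e ∉ s) (c : (P.G).Comp s → Prop)
    (hcv : c (P.mkc s P.v)) :
    (⟨P.lift (P.tOf (insert P.e s)), P.cTil (pushc (X := P.G) ⟨s, c⟩ P.e)⟩ :
        (P.G).EState) = ⟨P.lift (P.tOf s), P.cS1 (P.cRes c)⟩ := by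
  refine estate_eq (X := P.G) (congrArg P.lift P.tOf_insert_e) ?_
  intro u₁
  by_cases hu : u₁ = P.v
  · subst hu
    exact iff_of_false (P.cTil_v _) (P.cS1_v _)
  · rw [P.cTil_eval (Finset.mem_insert_self _ _) _ hu]
    rw [pushc_eval (X := P.G) (c := c) P.hvw u₁]
    rw [P.cS1_eval _ hu, P.cRes_eval hs c hu]
    erw [show (P.mkc s u₁ = P.mkc s P.v) ↔ False from
      iff_false_intro (fun h => hu ((P.mk_eq_v_iff hs).1 h))]
    rw [← P.mk_phi_iff hs hu P.hw_ne]
    constructor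
    · rintro (h | ⟨h1 | h1, _⟩)
      · exact Or.inl h
      · exact absurd h1 (fun h => h.elim)
      · exact Or.inr h1
    · rintro (h | h)
      · exact Or.inl h
      · exact Or.inr ⟨Or.inr h, Or.inl hcv⟩

lemma state_til_U_B {s : Finset (Fin (P.n + 1))} (hs : P.e ∉ s) (c : (P.G).Comp s → Prop)
    (hcv : ¬ c (P.mkc s P.v)) :
    (⟨P.lift (P.tOf (insert P.e s)), P.cTil (pushc (X := P.G) ⟨s, c⟩ P.e)⟩ :
        (P.G).EState) = ⟨s, c⟩ := by
  refine estate_eq (X := P.G) ((congrArg P.lift P.tOf_insert_e).trans (P.lift_tOf hs)) ?_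
  intro u₁
  by_cases hu : u₁ = P.v
  · subst hu
    exact iff_of_false (P.cTil_v _) hcv
  · rw [P.cTil_eval (Finset.mem_insert_self _ _) _ hu]
    rw [pushc_eval (X := P.G) (c := c) P.hvw u₁]
    erw [show (P.mkc s u₁ = P.mkc s P.v) ↔ False from
      iff_false_intro (fun h => hu ((P.mk_eq_v_iff hs).1 h))]
    constructor
    · rintro (h | ⟨h1 | h1, h2 | h2⟩)
      · exact h
      · exact h1.elim
      · exact h1.elim
      · exact absurd h2 hcv
      · exact cast (congrArg c h1).symm h2
    · exact fun h => Or.inl h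

lemma state_add_til_e {s : Finset (Fin (P.n + 1))} (he : P.e ∈ s) (c : (P.G).Comp s → Prop) :
    (P.G).addEdge ⟨P.lift (P.tOf s), P.cTil c⟩ P.e = Finsupp.single ⟨s, c⟩ 1 := by
  rw [addEdge_eq (X := P.G) P.hvw (P.e_not_mem_lift _)]
  rw [if_neg (fun h => P.cTil_v c h.2.1)]
  congr 1
  refine estate_eq (X := P.G) (P.insert_e_lift_tOf he) ?_
  intro u₁
  rw [pushc_eval (X := P.G) (c := P.cTil c) P.hvw u₁]
  by_cases hu : u₁ = P.v
  · subst hu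
    constructor
    · rintro (h | ⟨_, h2 | h2⟩)
      · exact absurd h (P.cTil_v c)
      · exact absurd h2 (P.cTil_v c)
      · rw [congrArg c (P.mk_v_w he)]
        exact (P.cTil_eval he c P.hw_ne).1 h2
    · intro h
      refine Or.inr ⟨Or.inl rfl, Or.inr ((P.cTil_eval he c P.hw_ne).2 ?_)⟩
      rwa [congrArg c (P.mk_v_w he)] at h
  · rw [P.cTil_eval he c hu, P.cTil_eval he c P.hw_ne]
    erw [show (P.mkc (P.lift (P.tOf s)) u₁ = P.mkc (P.lift (P.tOf s)) P.v) ↔ False from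
      iff_false_intro (fun h => hu ((P.mk_eq_v_iff (P.e_not_mem_lift _)).1 h))]
    erw [P.mk_lift_tOf_iff he hu P.hw_ne]
    constructor
    · rintro (h | ⟨h1 | h1, h2 | h2⟩)
      · exact h
      · exact h1.elim
      · exact h1.elim
      · exact absurd h2 (P.cTil_v c)
      · exact cast (congrArg c h1).symm h2
    · exact fun h => Or.inl h

lemma key_h0 {s : Finset (Fin (P.n + 1))} (hs : P.e ∉ s) (c : (P.G).Comp s → Prop)
    (k : Fin P.n) : P.hL ((P.G).addEdge ⟨s, c⟩ (P.sA k)) = 0 := by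
  by_cases hks : P.sA k ∈ s
  · rw [addEdge_of_mem _ hks, map_zero]
  · rw [addEdge_of_not_mem (X := P.G) ⟨s, c⟩ hks]
    split_ifs with h
    · simp
    · rw [hL_single]
      refine P.hS_of_not_mem ?_
      intro hmem
      rcases Finset.mem_insert.1 hmem with h1 | h1
      · exact P.sA_ne k h1.symm
      · exact hs h1

lemma key_hC {s : Finset (Fin (P.n + 1))} (he : P.e ∈ s) (c : (P.G).Comp s → Prop)
    (k : Fin P.n) :
    P.hL ((P.G).addEdge ⟨s, c⟩ (P.sA k)) =
      (-((-1 : ℤ) ^ (((insert (P.sA k) s).filter (· < P.e)).card))) •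
        (P.G).addEdge ⟨P.lift (P.tOf s), P.cTil c⟩ (P.sA k) := by
  classical
  by_cases hks : P.sA k ∈ s
  · rw [addEdge_of_mem _ hks,
      addEdge_of_mem (X := P.G) ⟨P.lift (P.tOf s), P.cTil c⟩
        (P.sA_mem_lift.2 (P.mem_tOf.2 hks)), map_zero, smul_zero]
  · obtain ⟨a, b, hab, ha, hb⟩ := P.sA_ends k
    have hkl : P.sA k ∉ P.lift (P.tOf s) :=
      fun h => hks (P.mem_tOf.1 (P.sA_mem_lift.1 h))
    have he' : P.e ∈ insert (P.sA k) s := Finset.mem_insert_of_mem he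
    rw [addEdge_eq (X := P.G) (c := c) hab hks,
      addEdge_eq (X := P.G) (c := P.cTil c) hab hkl]
    have hcond : (P.mkc s a ≠ P.mkc s b ∧ c (P.mkc s a) ∧ c (P.mkc s b)) ↔
        (@Ne (Quot ((P.G).rel (P.lift (P.tOf s)))) (P.mkc (P.lift (P.tOf s)) a) (P.mkc (P.lift (P.tOf s)) b) ∧
          P.cTil c (P.mkc (P.lift (P.tOf s)) a) ∧
          P.cTil c (P.mkc (P.lift (P.tOf s)) b)) :=
      and_congr (not_congr (P.mk_lift_tOf_iff he ha hb).symm)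
        (and_congr (P.cTil_eval he c ha).symm (P.cTil_eval he c hb).symm)
    erw [if_congr hcond rfl rfl]
    split_ifs with h
    · simp
    · erw [hL_single, P.hS_of_mem he']
      have hstate : (⟨P.lift (P.tOf (insert (P.sA k) s)),
          P.cTil (pushc (X := P.G) ⟨s, c⟩ (P.sA k))⟩ : (P.G).EState) =
          ⟨insert (P.sA k) (P.lift (P.tOf s)),
            pushc (X := P.G) ⟨P.lift (P.tOf s), P.cTil c⟩ (P.sA k)⟩ := by
        refine estate_eq (X := P.G)
          ((congrArg P.lift P.tOf_insert_sA).trans (P.lift_insert _ k)) ?_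
        intro u₁
        by_cases hu : u₁ = P.v
        · subst hu
          refine iff_of_false (P.cTil_v _) ?_
          intro hc
          rcases (pushc_eval (X := P.G) (c := P.cTil c) hab P.v).1 hc with h1 | ⟨h1 | h1, _⟩
          · exact P.cTil_v c h1
          · exact ha ((P.mk_eq_v_iff (P.e_not_mem_lift _)).1 h1.symm)
          · exact hb ((P.mk_eq_v_iff (P.e_not_mem_lift _)).1 h1.symm)
        · erw [P.cTil_eval he' _ hu,
            pushc_eval (X := P.G) (c := c) hab u₁,
            pushc_eval (X := P.G) (c := P.cTil c) hab u₁,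
            P.cTil_eval he c hu, P.cTil_eval he c ha, P.cTil_eval he c hb,
            P.mk_lift_tOf_iff he hu ha, P.mk_lift_tOf_iff he hu hb]
          rfl
      rw [hstate]
  done

end PSetup

namespace PSetup

open OGraph

variable (P : PSetup)

lemma coef_cancel {s : Finset (Fin (P.n + 1))} (he : P.e ∈ s) {k : Fin P.n}
    (hks : P.sA k ∉ s) :
    (-((-1 : ℤ) ^ ((s.filter (· < P.e)).card))) *
        ((-1 : ℤ) ^ (((P.lift (P.tOf s)).filter (· < P.sA k)).card)) +
      ((-1 : ℤ) ^ ((s.filter (· < P.sA k)).card)) *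
        (-((-1 : ℤ) ^ (((insert (P.sA k) s).filter (· < P.e)).card))) = 0 := by
  classical
  have h1 : (s.filter (· < P.sA k)).card =
      ((P.lift (P.tOf s)).filter (· < P.sA k)).card + if P.e < P.sA k then 1 else 0 := by
    conv_lhs => rw [← P.insert_e_lift_tOf he]
    exact P.filter_lt_insert_card (P.e_not_mem_lift _)
  have h2 : ((insert (P.sA k) s).filter (· < P.e)).card =
      (s.filter (· < P.e)).card + if P.sA k < P.e then 1 else 0 :=
    P.filter_lt_insert_card hks
  set x := ((P.lift (P.tOf s)).filter (· < P.sA k)).card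
  set y := (s.filter (· < P.e)).card
  rw [h1, h2]
  rcases lt_or_gt_of_ne (P.sA_ne k) with h | h
  · rw [if_pos h, if_neg (not_lt.2 h.le), add_zero, pow_add, pow_one]
    ring
  · rw [if_neg (not_lt.2 h.le), if_pos h, add_zero, pow_add, pow_one]
    ring

open Classical in
lemma homotopy_basis (S : (P.G).EState) :
    P.iotaL (P.piS S) - Finsupp.single S 1 =
      (P.G).diff (P.hS S) + P.hL ((P.G).dState S) := by
  classical
  obtain ⟨s, c⟩ := S
  by_cases hes : P.e ∈ s
  · -- case C
    rw [P.piS_of_mem hes, map_zero, zero_sub]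
    rw [P.hS_of_mem hes, map_smul, diff_single]
    simp only [OGraph.dState, map_sum, map_smul, Finset.smul_sum]
    rw [Fin.sum_univ_succAbove (fun f => (-((-1 : ℤ) ^ ((s.filter (· < P.e)).card))) •
      (((-1 : ℤ) ^ (((P.lift (P.tOf s)).filter (· < f)).card)) •
        (P.G).addEdge ⟨P.lift (P.tOf s), P.cTil c⟩ f)) P.e]
    rw [Fin.sum_univ_succAbove (fun f => ((-1 : ℤ) ^ ((s.filter (· < f)).card)) •
      P.hL ((P.G).addEdge ⟨s, c⟩ f)) P.e]
    rw [addEdge_of_mem (X := P.G) ⟨s, c⟩ hes, map_zero, smul_zero, zero_add]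
    rw [P.state_add_til_e hes c, P.filter_lift_tOf_e hes]
    rw [smul_smul, neg_pow_mul_self' _]
    have hz : (∑ k : Fin P.n, (-((-1 : ℤ) ^ ((s.filter (· < P.e)).card))) •
          (((-1 : ℤ) ^ (((P.lift (P.tOf s)).filter (· < P.sA k)).card)) •
            (P.G).addEdge ⟨P.lift (P.tOf s), P.cTil c⟩ (P.sA k))) +
        (∑ k : Fin P.n, ((-1 : ℤ) ^ ((s.filter (· < P.sA k)).card)) •
          P.hL ((P.G).addEdge ⟨s, c⟩ (P.sA k))) = 0 := by
      rw [← Finset.sum_add_distrib]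
      refine Finset.sum_eq_zero fun k _ => ?_
      by_cases hks : P.sA k ∈ s
      · rw [addEdge_of_mem (X := P.G) ⟨s, c⟩ hks,
          addEdge_of_mem (X := P.G) ⟨P.lift (P.tOf s), P.cTil c⟩
            (P.sA_mem_lift.2 (P.mem_tOf.2 hks)), map_zero, smul_zero, smul_zero,
          smul_zero, add_zero]
      · rw [P.key_hC hes c k, smul_smul, smul_smul, ← add_smul,
          P.coef_cancel hes hks, zero_smul]
    rw [add_assoc, hz, add_zero, neg_one_smul]
  · -- cases A and B
    rw [P.hS_of_not_mem hes, map_zero, zero_add]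
    simp only [OGraph.dState, map_sum, map_smul]
    rw [Fin.sum_univ_succAbove (fun f => ((-1 : ℤ) ^ ((s.filter (· < f)).card)) •
      P.hL ((P.G).addEdge ⟨s, c⟩ f)) P.e]
    rw [Finset.sum_eq_zero (fun k _ => by rw [P.key_h0 hes c k, smul_zero]), add_zero]
    by_cases hcv : c (P.mkc s P.v)
    · rw [P.piS_of_colored hes hcv, iotaL_single, iotaS]
      dsimp only
      by_cases hcw : c (P.mkc s P.w)
      · have hcnd : P.mkc s P.v ≠ P.mkc s P.w ∧ c (P.mkc s P.v) ∧ c (P.mkc s P.w) :=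
          ⟨P.mk_v_ne_w hes, hcv, hcw⟩
        erw [addEdge_eq (X := P.G) P.hvw hes, if_pos hcnd, map_zero, smul_zero]
        have hrw : P.cRes c (P.mkc' (P.tOf s) (P.φ P.w)) :=
          (P.cRes_eval hes c P.hw_ne).2 hcw
        rw [if_pos hrw, sub_zero, P.state_Sx_res hes c hcv, sub_self]
      · have hrw : ¬ P.cRes c (P.mkc' (P.tOf s) (P.φ P.w)) :=
          fun h => hcw ((P.cRes_eval hes c P.hw_ne).1 h)
        rw [if_neg hrw, P.state_Sx_res hes c hcv]
        rw [addEdge_eq (X := P.G) P.hvw hes, if_neg (fun h => hcw h.2.2), hL_single,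
          P.hS_of_mem (Finset.mem_insert_self _ _)]
        rw [P.state_til_U_A hes c hcv]
        rw [show ((insert P.e s).filter (· < P.e)) = s.filter (· < P.e) from
          P.filter_e_insert_e s]
        rw [smul_smul, neg_pow_mul_self _, neg_one_smul]
        abel
    · rw [P.piS_of_not_colored hes hcv, map_zero, zero_sub]
      rw [addEdge_eq (X := P.G) P.hvw hes, if_neg (fun h => hcv h.2.1), hL_single,
        P.hS_of_mem (Finset.mem_insert_self _ _)]
      rw [P.state_til_U_B hes c hcv]
      rw [show ((insert P.e s).filter (· < P.e)) = s.filter (· < P.e) from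
        P.filter_e_insert_e s]
      rw [smul_smul, neg_pow_mul_self _, neg_one_smul]

end PSetup

-- ====== jdeg computations ======
section CardHelpers

noncomputable def optEquivTrue {β : Type} {Q : Option β → Prop} (h0 : Q none) :
    {o : Option β // Q o} ≃ ({b : β // Q (some b)} ⊕ Unit) where
  toFun x := match x with
    | ⟨none, _⟩ => Sum.inr Unit.unit
    | ⟨some b, h⟩ => Sum.inl ⟨b, h⟩
  invFun y := match y with
    | Sum.inl ⟨b, h⟩ => ⟨some b, h⟩
    | Sum.inr _ => ⟨none, h0⟩
  left_inv := by rintro ⟨(_ | b), h⟩ <;> rfl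
  right_inv := by rintro (⟨b, h⟩ | ⟨⟩) <;> rfl

noncomputable def optEquivFalse {β : Type} {Q : Option β → Prop} (h0 : ¬ Q none) :
    {o : Option β // Q o} ≃ {b : β // Q (some b)} where
  toFun x := match x with
    | ⟨none, h⟩ => (h0 h).elim
    | ⟨some b, h⟩ => ⟨b, h⟩
  invFun y := ⟨some y.1, y.2⟩
  left_inv := by
    rintro ⟨(_ | b), h⟩
    · exact absurd h h0
    · rfl
  right_inv := by rintro ⟨b, h⟩; rfl

open Classical in
noncomputable def orEquiv {β : Type} {p : β → Prop} {a : β} (ha : ¬ p a) :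
    {x : β // p x ∨ x = a} ≃ ({x : β // p x} ⊕ Unit) where
  toFun x := if h : x.1 = a then Sum.inr Unit.unit
    else Sum.inl ⟨x.1, x.2.resolve_right h⟩
  invFun y := match y with
    | Sum.inl ⟨b, h⟩ => ⟨b, Or.inl h⟩
    | Sum.inr _ => ⟨a, Or.inr rfl⟩
  left_inv := by
    rintro ⟨x, hx⟩
    dsimp only
    by_cases h : x = a
    · rw [dif_pos h]
      exact Subtype.ext h.symm
    · rw [dif_neg h]
  right_inv := by
    rintro (⟨b, h⟩ | ⟨⟩)
    · dsimp only
      rw [dif_neg (fun hh : b = a => ha (hh ▸ h))]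
    · dsimp only
      rw [dif_pos rfl]

lemma nat_card_opt_true {β : Type} [Finite β] {Q : Option β → Prop} (h0 : Q none) :
    Nat.card {o : Option β // Q o} = Nat.card {b : β // Q (some b)} + 1 := by
  rw [Nat.card_congr (optEquivTrue h0), Nat.card_sum]
  congr 1
  exact Nat.card_unique

lemma nat_card_opt_false {β : Type} [Finite β] {Q : Option β → Prop} (h0 : ¬ Q none) :
    Nat.card {o : Option β // Q o} = Nat.card {b : β // Q (some b)} :=
  Nat.card_congr (optEquivFalse h0)

lemma nat_card_or {β : Type} [Finite β] {p : β → Prop} {a : β} (ha : ¬ p a) :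
    Nat.card {x : β // p x ∨ x = a} = Nat.card {x : β // p x} + 1 := by
  rw [Nat.card_congr (orEquiv ha), Nat.card_sum]
  congr 1
  exact Nat.card_unique

lemma card_subtype_iff {β : Type} {p p' : β → Prop} (h : ∀ b, p b ↔ p' b) :
    Nat.card {x // p x} = Nat.card {x // p' x} :=
  Nat.card_congr (Equiv.subtypeEquivRight h)

end CardHelpers

namespace OGraph

noncomputable instance compFintype (X : OGraph) (s : Finset (Fin X.n)) :
    Fintype (X.Comp s) :=
  finiteQuot (X.rel s)

lemma card_comp_congr {X : OGraph} {s s' : Finset (Fin X.n)} (h : s = s')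
    {p : X.Comp s → Prop} {p' : X.Comp s' → Prop}
    (hp : ∀ u, p (Quot.mk (X.rel s) u) ↔ p' (Quot.mk (X.rel s') u)) :
    Nat.card {K // p K} = Nat.card {K // p' K} := by
  subst h
  exact card_subtype_iff (fun K => by induction K using Quot.ind with | _ u => exact hp u)

end OGraph

namespace PSetup

open OGraph

variable (P : PSetup)

noncomputable def Bmap {s : Finset (Fin (P.n + 1))} (hs : P.e ∉ s) :
    (P.G').Comp (P.tOf s) → (P.G).Comp s :=
  Quot.lift (fun q => P.mkc s (P.ψ q))
    (fun q q' hqq => P.mk_of_phi hs (Relation.EqvGen.rel _ _ hqq)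
      (P.psi_ne q) (P.psi_ne q') (P.phi_psi q) (P.phi_psi q'))

open Classical in
noncomputable def compEquiv {s : Finset (Fin (P.n + 1))} (hs : P.e ∉ s) :
    (P.G).Comp s ≃ Option ((P.G').Comp (P.tOf s)) where
  toFun K := if K = P.mkc s P.v then none else some (P.Fmap hs K)
  invFun o := o.elim (P.mkc s P.v) (P.Bmap hs)
  left_inv := by
    intro K
    induction K using Quot.ind with
    | _ u =>
      dsimp only
      by_cases h : P.mkc s u = P.mkc s P.v
      · rw [if_pos h]
        exact h.symm
      · rw [if_neg h]
        have hu : u ≠ P.v := fun hh => h (hh ▸ rfl)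
        show P.mkc s (P.ψ (P.φ u)) = P.mkc s u
        rw [P.psi_phi hu]
  right_inv := by
    rintro (_ | K)
    · dsimp only
      rw [if_pos (show none.elim (P.mkc s P.v) (P.Bmap hs) = P.mkc s P.v from rfl)]
    · induction K using Quot.ind with
      | _ q =>
        dsimp only
        show (if P.mkc s (P.ψ q) = P.mkc s P.v then none
          else some (P.Fmap hs (P.mkc s (P.ψ q)))) = some (Quot.mk _ q)
        rw [if_neg (fun h => P.psi_ne q ((P.mk_eq_v_iff hs).1 h))]
        show some (P.mkc' (P.tOf s) (P.φ (P.ψ q))) = some (Quot.mk _ q)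
        erw [P.phi_psi q]
        rfl

noncomputable instance compFintype' (t : Finset (Fin P.n)) : Fintype ((P.G').Comp t) :=
  OGraph.compFintype P.G' t

open Classical in
lemma jdeg_master {s : Finset (Fin (P.n + 1))} (hs : P.e ∉ s) (c : (P.G).Comp s → Prop) :
    (P.G).jdeg ⟨s, c⟩ =
      Nat.card {q : (P.G').Comp (P.tOf s) // c (P.Bmap hs q)} +
        (if c (P.mkc s P.v) then 1 else 0) := by
  rw [OGraph.jdeg]
  have h1 : Nat.card {k : (P.G).Comp s // c k} =
      Nat.card {o : Option ((P.G').Comp (P.tOf s)) // c ((P.compEquiv hs).symm o)} :=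
    Nat.card_congr ((P.compEquiv hs).subtypeEquiv
      (fun K => by rw [Equiv.symm_apply_apply]))
  rw [h1]
  by_cases hcv : c (P.mkc s P.v)
  · rw [if_pos hcv, nat_card_opt_true (show c ((P.compEquiv hs).symm none) from hcv)]
    congr 1
  · rw [if_neg hcv, nat_card_opt_false (show ¬ c ((P.compEquiv hs).symm none) from hcv),
      add_zero]
    congr 1

lemma jdeg_res {s : Finset (Fin (P.n + 1))} (hs : P.e ∉ s) (c : (P.G).Comp s → Prop)
    (hcv : c (P.mkc s P.v)) :
    (P.G).jdeg ⟨s, c⟩ = (P.G').jdeg ⟨P.tOf s, P.cRes c⟩ + 1 := by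
  rw [P.jdeg_master hs c, if_pos hcv, OGraph.jdeg]
  congr 1
  refine card_subtype_iff (fun K => ?_)
  induction K using Quot.ind with
  | _ q =>
    show c (P.mkc s (P.ψ q)) ↔ P.cRes c (P.mkc' (P.tOf s) q)
    conv_rhs => rw [← P.phi_psi q]
    rw [P.cRes_eval hs c (P.psi_ne q)]

lemma state_res_Sx (t : Finset (Fin P.n)) (c : (P.G').Comp t → Prop) :
    (⟨P.tOf (P.lift t), P.cRes (P.cSx c)⟩ : (P.G').EState) = ⟨t, c⟩ := by
  refine estate_eq (X := P.G') (P.tOf_lift t) ?_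
  intro q
  rw [← P.phi_psi q]
  exact (P.cRes_eval (P.e_not_mem_lift t) _ (P.psi_ne q)).trans (P.cSx_eval c (P.psi_ne q))

lemma jdeg_Sx (t : Finset (Fin P.n)) (c : (P.G').Comp t → Prop) :
    (P.G).jdeg ⟨P.lift t, P.cSx c⟩ = (P.G').jdeg ⟨t, c⟩ + 1 := by
  rw [P.jdeg_res (P.e_not_mem_lift t) (P.cSx c) (P.cSx_v c)]
  rw [P.state_res_Sx t c]

lemma jdeg_S1 (t : Finset (Fin P.n)) (c : (P.G').Comp t → Prop)
    (hcw : ¬ c (P.mkc' t (P.φ P.w))) :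
    (P.G).jdeg ⟨P.lift t, P.cS1 c⟩ = (P.G').jdeg ⟨t, c⟩ + 1 := by
  rw [P.jdeg_master (P.e_not_mem_lift t) (P.cS1 c), if_neg (P.cS1_v c), add_zero]
  have h1 : Nat.card {q : (P.G').Comp (P.tOf (P.lift t)) //
      P.cS1 c (P.Bmap (P.e_not_mem_lift t) q)} =
      Nat.card {K : (P.G').Comp t // c K ∨ K = P.mkc' t (P.φ P.w)} := by
    refine card_comp_congr (X := P.G') (P.tOf_lift t) (fun q => ?_)
    show P.cS1 c (P.mkc (P.lift t) (P.ψ q)) ↔ _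
    rw [P.cS1_eval c (P.psi_ne q), P.phi_psi q]
  rw [h1, nat_card_or hcw, OGraph.jdeg]

noncomputable def Bmap' {s : Finset (Fin (P.n + 1))} (he : P.e ∈ s) :
    (P.G').Comp (P.tOf s) → (P.G).Comp s :=
  Quot.lift (fun q => P.mkc s (P.ψ q))
    (fun q q' hqq => (P.mk_phi_iff' he).2
      (by rw [P.phi_psi q, P.phi_psi q']; exact Quot.sound hqq))

noncomputable def ctrEquiv {s : Finset (Fin (P.n + 1))} (he : P.e ∈ s) :
    (P.G).Comp s ≃ (P.G').Comp (P.tOf s) where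
  toFun := P.Fmap' he
  invFun := P.Bmap' he
  left_inv := by
    intro K
    induction K using Quot.ind with
    | _ u =>
      show P.mkc s (P.ψ (P.φ u)) = P.mkc s u
      refine (P.mk_phi_iff' he).2 ?_
      rw [P.phi_psi (P.φ u)]
  right_inv := by
    intro K
    induction K using Quot.ind with
    | _ q =>
      show P.mkc' (P.tOf s) (P.φ (P.ψ q)) = Quot.mk _ q
      rw [P.phi_psi q]

lemma jdeg_ctr {s : Finset (Fin (P.n + 1))} (he : P.e ∈ s) (c : (P.G).Comp s → Prop) :
    (P.G).jdeg ⟨s, c⟩ = Nat.card {q : (P.G').Comp (P.tOf s) // c (P.Bmap' he q)} := by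
  rw [OGraph.jdeg]
  exact Nat.card_congr ((P.ctrEquiv he).subtypeEquiv
    (fun K => iff_of_eq (congrArg c ((P.ctrEquiv he).left_inv K)).symm))

lemma jdeg_til {s : Finset (Fin (P.n + 1))} (he : P.e ∈ s) (c : (P.G).Comp s → Prop) :
    (P.G).jdeg ⟨P.lift (P.tOf s), P.cTil c⟩ = (P.G).jdeg ⟨s, c⟩ := by
  rw [P.jdeg_master (P.e_not_mem_lift _) (P.cTil c), if_neg (P.cTil_v c), add_zero]
  rw [P.jdeg_ctr he c]
  refine card_comp_congr (X := P.G') (P.tOf_lift (P.tOf s)) (fun q => ?_)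
  show P.cTil c (P.mkc (P.lift (P.tOf s)) (P.ψ q)) ↔ c (P.mkc s (P.ψ q))
  exact P.cTil_eval he c (P.psi_ne q)

lemma jdeg_pos {s : Finset (Fin (P.n + 1))} (c : (P.G).Comp s → Prop)
    (hcv : c (P.mkc s P.v)) : 1 ≤ (P.G).jdeg ⟨s, c⟩ := by
  rw [OGraph.jdeg]
  have : Nonempty {k : (P.G).Comp s // c k} := ⟨⟨P.mkc s P.v, hcv⟩⟩
  exact Nat.card_pos

end PSetup

namespace OGraph

lemma stm_vanish {α β : Type} (g : α → β →₀ ℤ) {A : Set α} (h : ∀ a ∈ A, g a = 0)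
    {x : α →₀ ℤ} (hx : x ∈ Finsupp.supported ℤ ℤ A) : stm g x = 0 := by
  have h2 := stm_supported g (B := (∅ : Set β))
    (fun a ha => by rw [h a ha]; exact Submodule.zero_mem _) hx
  rwa [Finsupp.supported_empty, Submodule.mem_bot] at h2

end OGraph

namespace PSetup

open OGraph

variable (P : PSetup)

lemma single_smul_one {α : Type} (a : α) (b : ℤ) :
    Finsupp.single a b = b • Finsupp.single a (1 : ℤ) := by
  rw [Finsupp.smul_single, smul_eq_mul, mul_one]

lemma pi_diff_comm (x : (P.G).EState →₀ ℤ) :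
    P.piL ((P.G).diff x) = (P.G').diff (P.piL x) := by
  have h : P.piL.comp ((P.G).diff) = ((P.G').diff).comp P.piL := by
    refine Finsupp.lhom_ext fun S b => ?_
    rw [LinearMap.comp_apply, LinearMap.comp_apply, single_smul_one]
    simp only [map_smul]
    rw [diff_single, piL_single, pi_chain]
  exact LinearMap.congr_fun h x

lemma iota_diff_comm (y : (P.G').EState →₀ ℤ) :
    P.iotaL ((P.G').diff y) = (P.G).diff (P.iotaL y) := by
  have h : P.iotaL.comp ((P.G').diff) = ((P.G).diff).comp P.iotaL := by
    refine Finsupp.lhom_ext fun T b => ?_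
    rw [LinearMap.comp_apply, LinearMap.comp_apply, single_smul_one]
    simp only [map_smul]
    rw [diff_single, iotaL_single, iota_chain]
  exact LinearMap.congr_fun h y

lemma pi_iota_all (y : (P.G').EState →₀ ℤ) : P.piL (P.iotaL y) = y := by
  have h : P.piL.comp P.iotaL = LinearMap.id := by
    refine Finsupp.lhom_ext fun T b => ?_
    rw [LinearMap.comp_apply, LinearMap.id_apply, single_smul_one]
    simp only [map_smul]
    rw [iotaL_single, pi_iota]
  exact LinearMap.congr_fun h y

lemma homotopy_all (x : (P.G).EState →₀ ℤ) :
    P.iotaL (P.piL x) - x = (P.G).diff (P.hL x) + P.hL ((P.G).diff x) := by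
  have h : (P.iotaL.comp P.piL - LinearMap.id) =
      (((P.G).diff).comp P.hL + P.hL.comp ((P.G).diff)) := by
    refine Finsupp.lhom_ext fun S b => ?_
    rw [LinearMap.sub_apply, LinearMap.add_apply, LinearMap.comp_apply,
      LinearMap.comp_apply, LinearMap.comp_apply, LinearMap.id_apply, single_smul_one]
    simp only [map_smul]
    rw [← smul_sub, ← smul_add]
    rw [piL_single, hL_single, diff_single]
    rw [P.homotopy_basis S]
  have h2 := LinearMap.congr_fun h x
  rw [LinearMap.sub_apply, LinearMap.add_apply, LinearMap.comp_apply,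
    LinearMap.comp_apply, LinearMap.comp_apply, LinearMap.id_apply] at h2
  exact h2

lemma piL_grade {i j : ℕ} {x : (P.G).EState →₀ ℤ} (hx : x ∈ (P.G).Cmod i (j + 1)) :
    P.piL x ∈ (P.G').Cmod i j := by
  refine stm_supported _ (fun S hS => ?_) hx
  obtain ⟨s, c⟩ := S
  obtain ⟨hcard, hjdeg⟩ := hS
  by_cases hes : P.e ∈ s
  · rw [P.piS_of_mem hes]; exact Submodule.zero_mem _
  by_cases hcv : c (P.mkc s P.v)
  · rw [P.piS_of_colored hes hcv]
    refine Finsupp.single_mem_supported ℤ 1 ?_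
    refine ⟨?_, ?_⟩
    · show (P.tOf s).card = i
      rw [P.card_tOf hes]; exact hcard
    · show (P.G').jdeg ⟨P.tOf s, P.cRes c⟩ = j
      have h2 := P.jdeg_res hes c hcv
      have hjdeg' : (P.G).jdeg ⟨s, c⟩ = j + 1 := hjdeg
      rw [hjdeg'] at h2
      omega
  · rw [P.piS_of_not_colored hes hcv]; exact Submodule.zero_mem _

lemma piL_zero_grade {i : ℕ} {x : (P.G).EState →₀ ℤ} (hx : x ∈ (P.G).Cmod i 0) :
    P.piL x = 0 := by
  refine stm_vanish _ (fun S hS => ?_) hx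
  obtain ⟨s, c⟩ := S
  obtain ⟨hcard, hjdeg⟩ := hS
  by_cases hes : P.e ∈ s
  · exact P.piS_of_mem hes
  by_cases hcv : c (P.mkc s P.v)
  · have := P.jdeg_pos c hcv
    omega
  · exact P.piS_of_not_colored hes hcv

lemma iotaL_grade {i j : ℕ} {y : (P.G').EState →₀ ℤ} (hy : y ∈ (P.G').Cmod i j) :
    P.iotaL y ∈ (P.G).Cmod i (j + 1) := by
  refine stm_supported _ (fun T hT => ?_) hy
  obtain ⟨t, c⟩ := T
  obtain ⟨hcard, hjdeg⟩ := hT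
  rw [iotaS]
  refine Submodule.sub_mem _ ?_ ?_
  · refine Finsupp.single_mem_supported ℤ 1 ⟨?_, ?_⟩
    · show (P.lift t).card = i
      erw [P.card_lift]; exact hcard
    · show (P.G).jdeg ⟨P.lift t, P.cSx c⟩ = j + 1
      rw [P.jdeg_Sx t c, hjdeg]
  · split_ifs with hcw
    · exact Submodule.zero_mem _
    · refine Finsupp.single_mem_supported ℤ 1 ⟨?_, ?_⟩
      · show (P.lift t).card = i
        erw [P.card_lift]; exact hcard
      · show (P.G).jdeg ⟨P.lift t, P.cS1 c⟩ = j + 1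
        rw [P.jdeg_S1 t c hcw, hjdeg]

lemma hL_grade {i j : ℕ} {x : (P.G).EState →₀ ℤ} (hx : x ∈ (P.G).Cmod (i + 1) j) :
    P.hL x ∈ (P.G).Cmod i j := by
  refine stm_supported _ (fun S hS => ?_) hx
  obtain ⟨s, c⟩ := S
  obtain ⟨hcard, hjdeg⟩ := hS
  by_cases hes : P.e ∈ s
  · rw [P.hS_of_mem hes]
    refine Submodule.smul_mem _ _ ?_
    refine Finsupp.single_mem_supported ℤ 1 ⟨?_, ?_⟩
    · show (P.lift (P.tOf s)).card = i
      rw [P.card_lift]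
      have h1 := P.card_tOf' hes
      have hcard' : s.card = i + 1 := hcard
      omega
    · show (P.G).jdeg ⟨P.lift (P.tOf s), P.cTil c⟩ = j
      rw [P.jdeg_til hes c]; exact hjdeg
  · rw [P.hS_of_not_mem hes]; exact Submodule.zero_mem _

lemma hL_zero_grade {j : ℕ} {x : (P.G).EState →₀ ℤ} (hx : x ∈ (P.G).Cmod 0 j) :
    P.hL x = 0 := by
  refine stm_vanish _ (fun S hS => ?_) hx
  obtain ⟨s, c⟩ := S
  obtain ⟨hcard, _⟩ := hS
  refine P.hS_of_not_mem ?_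
  rw [Finset.card_eq_zero.1 hcard]
  exact Finset.notMem_empty _

end PSetup

namespace PSetup

open OGraph

variable (P : PSetup)

lemma mem_zmod_iff {X : OGraph} {i j : ℕ} {x : X.EState →₀ ℤ} :
    x ∈ X.Zmod i j ↔ X.diff x = 0 ∧ x ∈ X.Cmod i j := by
  rw [Zmod, Submodule.mem_inf, LinearMap.mem_ker]

lemma piZmem {i j : ℕ} {x : (P.G).EState →₀ ℤ} (hx : x ∈ (P.G).Zmod i (j + 1)) :
    P.piL x ∈ (P.G').Zmod i j := by
  rw [mem_zmod_iff] at hx ⊢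
  exact ⟨by rw [← pi_diff_comm, hx.1, map_zero], P.piL_grade hx.2⟩

lemma iotaZmem {i j : ℕ} {y : (P.G').EState →₀ ℤ} (hy : y ∈ (P.G').Zmod i j) :
    P.iotaL y ∈ (P.G).Zmod i (j + 1) := by
  rw [mem_zmod_iff] at hy ⊢
  exact ⟨by rw [← iota_diff_comm, hy.1, map_zero], P.iotaL_grade hy.2⟩

lemma piBmem {i j : ℕ} {x : (P.G).EState →₀ ℤ} (hx : x ∈ (P.G).Bmod i (j + 1)) :
    P.piL x ∈ (P.G').Bmod i j := by
  cases i with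
  | zero =>
    rw [show (P.G).Bmod 0 (j + 1) = ⊥ from rfl, Submodule.mem_bot] at hx
    rw [hx, map_zero]
    exact Submodule.zero_mem _
  | succ i' =>
    rw [show (P.G).Bmod (i' + 1) (j + 1) =
      Submodule.map (P.G).diff ((P.G).Cmod i' (j + 1)) from rfl, Submodule.mem_map] at hx
    obtain ⟨y, hy, hdy⟩ := hx
    rw [← hdy, pi_diff_comm]
    rw [show (P.G').Bmod (i' + 1) j =
      Submodule.map (P.G').diff ((P.G').Cmod i' j) from rfl]
    exact Submodule.mem_map_of_mem (P.piL_grade hy)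

lemma core_b {i j : ℕ} {z : (P.G).EState →₀ ℤ} (hz : z ∈ (P.G).Zmod i (j + 1))
    (hb : P.piL z ∈ (P.G').Bmod i j) : z ∈ (P.G).Bmod i (j + 1) := by
  rw [mem_zmod_iff] at hz
  have hhom := P.homotopy_all z
  rw [hz.1, map_zero, add_zero] at hhom
  cases i with
  | zero =>
    rw [show (P.G').Bmod 0 j = ⊥ from rfl, Submodule.mem_bot] at hb
    rw [hb, map_zero, zero_sub, P.hL_zero_grade hz.2, map_zero] at hhom
    rw [show (P.G).Bmod 0 (j + 1) = ⊥ from rfl, Submodule.mem_bot]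
    exact neg_eq_zero.1 hhom
  | succ i' =>
    rw [show (P.G').Bmod (i' + 1) j =
      Submodule.map (P.G').diff ((P.G').Cmod i' j) from rfl, Submodule.mem_map] at hb
    obtain ⟨x, hx, hdx⟩ := hb
    have hzz : z = (P.G).diff (P.iotaL x - P.hL z) := by
      rw [map_sub]
      have h2 : P.iotaL (P.piL z) = (P.G).diff (P.iotaL x) := by
        rw [← hdx, iota_diff_comm]
      rw [← h2, ← hhom]
      abel
    rw [hzz, show (P.G).Bmod (i' + 1) (j + 1) =
      Submodule.map (P.G).diff ((P.G).Cmod i' (j + 1)) from rfl]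
    exact Submodule.mem_map_of_mem
      (Submodule.sub_mem _ (P.iotaL_grade hx) (P.hL_grade hz.2))

lemma core_b0 {i : ℕ} {z : (P.G).EState →₀ ℤ} (hz : z ∈ (P.G).Zmod i 0) :
    z ∈ (P.G).Bmod i 0 := by
  rw [mem_zmod_iff] at hz
  have hpz : P.piL z = 0 := P.piL_zero_grade hz.2
  have hhom := P.homotopy_all z
  rw [hz.1, map_zero, add_zero, hpz, map_zero, zero_sub] at hhom
  cases i with
  | zero =>
    rw [P.hL_zero_grade hz.2, map_zero] at hhom
    rw [show (P.G).Bmod 0 0 = ⊥ from rfl, Submodule.mem_bot]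
    exact neg_eq_zero.1 hhom
  | succ i' =>
    have hzz : z = (P.G).diff (-(P.hL z)) := by
      rw [map_neg, ← hhom, neg_neg]
    rw [hzz, show (P.G).Bmod (i' + 1) 0 =
      Submodule.map (P.G).diff ((P.G).Cmod i' 0) from rfl]
    exact Submodule.mem_map_of_mem (Submodule.neg_mem _ (P.hL_grade hz.2))

noncomputable def piZ (i j : ℕ) :
    ((P.G).Zmod i (j + 1)).toAddSubgroup →+ ((P.G').Zmod i j).toAddSubgroup :=
  AddMonoidHom.mk'
    (fun z => ⟨P.piL z.1,
      (Submodule.mem_toAddSubgroup _).2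
        (P.piZmem ((Submodule.mem_toAddSubgroup _).1 z.2))⟩)
    (fun a b => Subtype.ext (map_add P.piL a.1 b.1))

noncomputable def hmodMap (i j : ℕ) : (P.G).Hmod i (j + 1) →+ (P.G').Hmod i j :=
  QuotientAddGroup.lift _
    ((QuotientAddGroup.mk'
        (AddSubgroup.comap ((P.G').Zmod i j).toAddSubgroup.subtype
          ((P.G').Bmod i j).toAddSubgroup)).comp (P.piZ i j))
    (by
      intro z hz
      erw [AddMonoidHom.mem_ker]
      show QuotientAddGroup.mk' _ (P.piZ i j z) = 0
      rw [QuotientAddGroup.mk'_apply, QuotientAddGroup.eq_zero_iff, AddSubgroup.mem_comap]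
      refine (Submodule.mem_toAddSubgroup _).2 (P.piBmem ?_)
      rw [AddSubgroup.mem_comap] at hz
      exact (Submodule.mem_toAddSubgroup _).1 hz)

lemma hmodMap_bijective (i j : ℕ) : Function.Bijective (P.hmodMap i j) := by
  constructor
  · rw [injective_iff_map_eq_zero]
    intro a
    induction a using QuotientAddGroup.induction_on with
    | _ z =>
      intro ha
      have h1 : QuotientAddGroup.mk' (AddSubgroup.comap ((P.G').Zmod i j).toAddSubgroup.subtype
          ((P.G').Bmod i j).toAddSubgroup) (P.piZ i j z) = 0 := ha
      rw [QuotientAddGroup.mk'_apply, QuotientAddGroup.eq_zero_iff,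
        AddSubgroup.mem_comap] at h1
      have hz' : P.piL z.1 ∈ (P.G').Bmod i j := (Submodule.mem_toAddSubgroup _).1 h1
      have hzmem : z.1 ∈ (P.G).Zmod i (j + 1) := (Submodule.mem_toAddSubgroup _).1 z.2
      have hzb := P.core_b hzmem hz'
      refine (QuotientAddGroup.eq_zero_iff z).2 ?_
      rw [AddSubgroup.mem_comap]
      exact (Submodule.mem_toAddSubgroup _).2 hzb
  · intro h'
    induction h' using QuotientAddGroup.induction_on with
    | _ y =>
      have hy : y.1 ∈ (P.G').Zmod i j := (Submodule.mem_toAddSubgroup _).1 y.2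
      have hmem : P.iotaL y.1 ∈ ((P.G).Zmod i (j + 1)).toAddSubgroup :=
        (Submodule.mem_toAddSubgroup _).2 (P.iotaZmem hy)
      refine ⟨QuotientAddGroup.mk' _ ⟨P.iotaL y.1, hmem⟩, ?_⟩
      have hel : P.piZ i j ⟨P.iotaL y.1, hmem⟩ = y := Subtype.ext (P.pi_iota_all y.1)
      show QuotientAddGroup.mk' _ (P.piZ i j ⟨P.iotaL y.1, hmem⟩) = _
      rw [hel]
      exact QuotientAddGroup.mk'_apply _ y

lemma hmod_zero_sub (i : ℕ) : Subsingleton ((P.G).Hmod i 0) := by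
  have hall : ∀ a : (P.G).Hmod i 0, a = 0 := by
    intro a
    induction a using QuotientAddGroup.induction_on with
    | _ z =>
      have hzmem : z.1 ∈ (P.G).Zmod i 0 := (Submodule.mem_toAddSubgroup _).1 z.2
      refine (QuotientAddGroup.eq_zero_iff z).2 ?_
      rw [AddSubgroup.mem_comap]
      exact (Submodule.mem_toAddSubgroup _).2 (P.core_b0 hzmem)
  exact ⟨fun a b => (hall a).trans (hall b).symm⟩

end PSetup

/-- if `e` is a pendant edge of `G` (an edge, not a loop, one of
whose endpoints lies on no other edge), then `H^i(G) ≅ H^i(G/e){1}` for all `i`,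
where `{1}` shifts all degrees up by `1`: that is, `H^{i,j+1}(G) ≅ H^{i,j}(G/e)`
for all `j`, and `H^{i,0}(G) = 0`. -/
theorem cohomology_pendant_edge (V : Type) [Fintype V] {n : ℕ}
    (ends : Fin (n + 1) → Sym2 V) (e : Fin (n + 1)) (v : V)
    (hv : v ∈ ends e) (hnl : ¬(ends e).IsDiag)
    (hdeg : ∀ f : Fin (n + 1), v ∈ ends f → f = e) :
    (∀ i j : ℕ, Nonempty
        ((OGraph.mk V (n + 1) ends).Hmod i (j + 1) ≃+ (OGraph.ctrG V ends e).Hmod i j)) ∧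
      ∀ i : ℕ, Subsingleton ((OGraph.mk V (n + 1) ends).Hmod i 0) := by
  obtain ⟨w, hw⟩ := Sym2.mem_iff_exists.1 hv
  have hne : v ≠ w := fun h => hnl (by rw [hw]; exact Sym2.mk_isDiag_iff.2 h)
  let Pp : PSetup :=
    { V := V, n := n, ends := ends, e := e, v := v, w := w,
      hvw := hw, hne := hne, hdeg := hdeg }
  constructor
  · intro i j
    exact ⟨AddEquiv.ofBijective (Pp.hmodMap i j) (Pp.hmodMap_bijective i j)⟩
  · intro i
    exact Pp.hmod_zero_sub i
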